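/- arXiv:1303.0400 — 5 statements merged into one kernel-verified Lean document; each statement's English description precedes it below -/
import Mathlib

section
/- If Y is a uniformly random permutation of the multiset with d copies of each element of [n], then for any two fixed distinct edge positions, the probability that the two corresponding edges of Y are identical as multisets is at most (k!)^2 * n^k * d^{2k} / (nd)_{2k}, where (x)_a denotes the falling factorial. -/
/-!
Double count the pairs `(y, e)` of a sequence `y` and an injection `e` of the `2k` positions
of two edges into `[nd]`. Permuting positions preserves the set of sequences, so every `e` sees
the same number of `y` whose two blocks under `e` carry the same multiset; there are `(nd)_{2k}`
injections. For a fixed `y`, the fibres of `e ↦ y ∘ e` have at most `d^{2k}` elements, and a word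
whose two halves carry the same multiset is determined by its first half (`n^k` choices) and a
permutation of it (`k!` choices). This gives the bound even with a single factor `k!`.
-/

/-- The set of permutations of the multiset consisting of `d` copies of each element of
`Fin n`, encoded as sequences of length `n*d` (functions `Fin (n*d) → Fin n`) in which
every symbol occurs exactly `d` times. -/
def permSet (n d : ℕ) : Finset (Fin (n * d) → Fin n) :=
  Finset.univ.filter (fun y => ∀ v, (Finset.univ.filter (fun i => y i = v)).card = d)

/-- The `i`-th edge of the sequence `y`: the multiset of its entries in positions
`k*i+1, …, k*i+k` (0-indexed: `k*i, …, k*i+k-1`); positions out of range contribute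
nothing (which never happens for `i < m` when `n*d = k*m`). -/
def edgeOf {n d : ℕ} (k : ℕ) (y : Fin (n * d) → Fin n) (i : ℕ) : Multiset (Fin n) :=
  (Finset.range k).val.filterMap
    (fun j => if h : k * i + j < n * d then some (y ⟨k * i + j, h⟩) else none)

/-- A multiset (edge) is a *simple loop* if exactly one vertex has multiplicity 2 and
no vertex has multiplicity greater than 2 (so all other vertices are distinct, of
multiplicity 1). -/
def isSimpleLoop {n : ℕ} (e : Multiset (Fin n)) : Prop :=
  (Finset.univ.filter (fun v => e.count v = 2)).card = 1 ∧ ∀ v, e.count v ≤ 2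

instance {n : ℕ} : DecidablePred (isSimpleLoop (n := n)) := fun _ => by
  unfold isSimpleLoop; infer_instance

/-- The number of edges of `y` (among its `n*d/k` consecutive `k`-blocks) that are
simple loops. -/
def numSimpleLoops {n d : ℕ} (k : ℕ) (y : Fin (n * d) → Fin n) : ℕ :=
  ((Finset.range (n * d / k)).filter (fun i => isSimpleLoop (edgeOf k y i))).card

open Finset Function

section TupleCounting

variable {ι α : Type*} [Fintype ι] [DecidableEq α]

theorem exists_perm_eq_comp_of_map_univ_eq {u v : ι → α}
    (h : univ.val.map u = univ.val.map v) : ∃ σ : Equiv.Perm ι, v = u ∘ σ := by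
  classical
  have hfiber : ∀ c, Fintype.card {a // v a = c} = Fintype.card {a // u a = c} := by
    intro c
    have hc := congrArg (Multiset.count c) h
    simp only [Multiset.count_map, @eq_comm _ c] at hc
    rw [Fintype.card_subtype, Fintype.card_subtype]
    exact hc.symm
  exact ⟨Equiv.ofFiberEquiv fun c => Fintype.equivOfCardEq (hfiber c),
    funext fun a => (Equiv.ofFiberEquiv_map _ a).symm⟩

variable [DecidableEq ι] [Fintype α]

theorem card_filter_map_univ_eq_le (u : ι → α) :
    #{v : ι → α | univ.val.map v = univ.val.map u} ≤ (Fintype.card ι).factorial := by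
  rw [← Fintype.card_perm, ← card_univ]
  refine card_le_card_of_surjOn (fun σ : Equiv.Perm ι => u ∘ σ) fun v hv => ?_
  obtain ⟨σ, rfl⟩ := exists_perm_eq_comp_of_map_univ_eq (mem_filter.mp hv).2.symm
  exact ⟨σ, mem_coe.mpr (mem_univ σ), rfl⟩

theorem card_filter_map_inl_eq_map_inr_le :
    #{w : ι ⊕ ι → α | univ.val.map (w ∘ Sum.inl) = univ.val.map (w ∘ Sum.inr)}
      ≤ Fintype.card α ^ Fintype.card ι * (Fintype.card ι).factorial := by
  refine (card_le_mul_card_image (f := (· ∘ Sum.inl)) _ (Fintype.card ι).factorial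
    fun u _ => ?_).trans ?_
  · refine (card_le_card_of_injOn (· ∘ Sum.inr) (fun w hw => ?_)
      fun w₁ hw₁ w₂ hw₂ hr => ?_).trans (card_filter_map_univ_eq_le u)
    · simp only [coe_filter, mem_filter, mem_univ, true_and, Set.mem_ofPred_eq] at hw ⊢
      rw [← hw.1, hw.2]
    · simp only [coe_filter, mem_filter, mem_univ, true_and, Set.mem_ofPred_eq] at hw₁ hw₂
      funext x
      cases x with
      | inl a => exact congrFun (hw₁.2.trans hw₂.2.symm) a
      | inr a => exact congrFun hr a
  · rw [mul_comm, ← Fintype.card_fun]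
    exact Nat.mul_le_mul_right _ (card_le_univ _)

end TupleCounting

section Embeddings

variable {α β γ : Type*} (P : (γ → α) → Prop) [DecidablePred P]

theorem card_filter_comp_embedding_eq [Finite γ] {S : Finset (β → α)}
    (hS : ∀ y ∈ S, ∀ π : Equiv.Perm β, y ∘ π ∈ S) (e e' : γ ↪ β) :
    #{y ∈ S | P (y ∘ e)} = #{y ∈ S | P (y ∘ e')} := by
  obtain ⟨π, hπ⟩ := Equiv.Perm.exists_extending_pair e e' e.injective e'.injective
  have hcomp : ∀ y : β → α, y ∘ π ∘ e = y ∘ e' := fun y => funext fun c => congrArg y (hπ c)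
  refine card_nbij' (· ∘ π.symm) (· ∘ π) (fun y hy => ?_) (fun y hy => ?_)
    (fun y _ => by simp [comp_assoc]) (fun y _ => by simp [comp_assoc])
  · obtain ⟨hyS, hyP⟩ := mem_filter.mp hy
    refine mem_filter.mpr ⟨hS y hyS _, ?_⟩
    rwa [← hcomp, ← comp_assoc, comp_assoc y, Equiv.symm_comp_self, comp_id]
  · obtain ⟨hyS, hyP⟩ := mem_filter.mp hy
    refine mem_filter.mpr ⟨hS y hyS _, ?_⟩
    rwa [comp_assoc, hcomp]

variable [Fintype β] [Fintype γ] [DecidableEq γ] [DecidableEq α]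

theorem card_filter_comp_eq_pow {y : β → α} {d : ℕ} (hy : ∀ a, #{b | y b = a} = d)
    (w : γ → α) : #{g : γ → β | y ∘ g = w} = d ^ Fintype.card γ := by
  calc #{g : γ → β | y ∘ g = w}
      = Fintype.card {g : γ → β // ∀ c, y (g c) = w c} := by
        simp only [Fintype.card_subtype, funext_iff, comp_apply]
    _ = Fintype.card (∀ c, {b // y b = w c}) :=
      Fintype.card_congr (Equiv.subtypePiEquivPi (p := fun c b => y b = w c))
    _ = d ^ Fintype.card γ := by simp [Fintype.card_pi, Fintype.card_subtype, hy]

variable [Fintype α]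

theorem card_filter_comp_embedding_le {y : β → α} {d : ℕ} (hy : ∀ a, #{b | y b = a} = d) :
    #{e : γ ↪ β | P (y ∘ e)} ≤ #{w | P w} * d ^ Fintype.card γ := by
  refine (card_le_mul_card_image (f := fun e : γ ↪ β => y ∘ e) _ (d ^ Fintype.card γ)
    fun w _ => ?_).trans ?_
  · rw [← card_filter_comp_eq_pow hy w]
    refine card_le_card_of_injOn (fun e => ⇑e) (fun e he => ?_) DFunLike.coe_injective.injOn
    simpa using (mem_filter.mp he).2
  · rw [mul_comm]
    refine Nat.mul_le_mul_right _ (card_le_card fun w hw => ?_)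
    obtain ⟨e, he, rfl⟩ := mem_image.mp hw
    simpa using he

theorem card_filter_comp_mul_descFactorial_le {S : Finset (β → α)} {d : ℕ}
    (hS : ∀ y ∈ S, ∀ π : Equiv.Perm β, y ∘ π ∈ S) (hy : ∀ y ∈ S, ∀ a, #{b | y b = a} = d)
    (e₀ : γ ↪ β) :
    #{y ∈ S | P (y ∘ e₀)} * (Fintype.card β).descFactorial (Fintype.card γ)
      ≤ #S * (#{w | P w} * d ^ Fintype.card γ) :=
  calc #{y ∈ S | P (y ∘ e₀)} * (Fintype.card β).descFactorial (Fintype.card γ)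
      = ∑ e : γ ↪ β, #{y ∈ S | P (y ∘ e)} := by
        rw [sum_congr rfl fun e _ => card_filter_comp_embedding_eq P hS e e₀, sum_const,
          card_univ, Fintype.card_embedding_eq, smul_eq_mul, mul_comm]
    _ = ∑ y ∈ S, #{e : γ ↪ β | P (y ∘ e)} :=
      (sum_card_bipartiteAbove_eq_sum_card_bipartiteBelow _).symm
    _ ≤ #S * (#{w | P w} * d ^ Fintype.card γ) :=
      sum_le_card_nsmul _ _ _ fun y hyS => card_filter_comp_embedding_le P (hy y hyS)

end Embeddings

section EdgePositions

variable {N k i j : ℕ}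

def edgePos (k i : ℕ) (h : k * i + k ≤ N) (l : Fin k) : Fin N := ⟨k * i + l, by omega⟩

theorem edgePos_injective (h : k * i + k ≤ N) : Injective (edgePos k i h) :=
  fun _ _ hab => Fin.ext (Nat.add_left_cancel (Fin.mk.inj hab))

theorem edgePos_ne (hi : k * i + k ≤ N) (hj : k * j + k ≤ N) (hij : i ≠ j) (a b : Fin k) :
    edgePos k i hi a ≠ edgePos k j hj b := by
  intro hab
  have hk : 0 < k := Fin.pos a
  have := congrArg (fun x : Fin N => (x : ℕ) / k) hab
  simp only [edgePos, Nat.mul_add_div hk, Nat.div_eq_of_lt a.isLt,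
    Nat.div_eq_of_lt b.isLt] at this
  exact hij (by simpa using this)

def edgePairEmbedding (hi : k * i + k ≤ N) (hj : k * j + k ≤ N) (hij : i ≠ j) :
    Fin k ⊕ Fin k ↪ Fin N :=
  ⟨Sum.elim (edgePos k i hi) (edgePos k j hj),
    (edgePos_injective hi).sumElim (edgePos_injective hj) (edgePos_ne hi hj hij)⟩

end EdgePositions

theorem edgeOf_eq_map_edgePos {n d k i : ℕ} (h : k * i + k ≤ n * d) (y : Fin (n * d) → Fin n) :
    edgeOf k y i = univ.val.map (y ∘ edgePos k i h) := by
  have hf : (fun l => if h : k * i + l < n * d then some (y ⟨k * i + l, h⟩) else none)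
      ∘ (Fin.val : Fin k → ℕ) = some ∘ (y ∘ edgePos k i h) :=
    funext fun l => dif_pos _
  rw [edgeOf, ← Nat.Iio_eq_range, ← Fin.map_valEmbedding_univ, map_val,
    Multiset.filterMap_map]
  exact (congrArg (Multiset.filterMap · _) hf).trans (congrFun (Multiset.filterMap_eq_map _) _)

theorem comp_perm_mem_permSet {n d : ℕ} {y : Fin (n * d) → Fin n} (hy : y ∈ permSet n d)
    (π : Equiv.Perm (Fin (n * d))) : y ∘ π ∈ permSet n d := by
  simp only [permSet, mem_filter, mem_univ, true_and] at hy ⊢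
  intro v
  exact (card_equiv π fun _ => by simp).trans (hy v)

theorem natCast_div_le_div_of_mul_le {a b c D : ℕ} (hD : 0 < D) (h : a * D ≤ b * c) :
    (a : ℝ) / b ≤ c / D := by
  rcases Nat.eq_zero_or_pos b with rfl | hb
  · simp only [Nat.cast_zero, div_zero]
    positivity
  · rw [div_le_div_iff₀ (by exact_mod_cast hb) (by exact_mod_cast hD)]
    exact_mod_cast h.trans_eq (mul_comm b c)

theorem stmt2_general (n d k m : ℕ) (hm : n * d = k * m) (i j : ℕ) (hi : i < m) (hj : j < m)
    (hij : i ≠ j) :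
    (((permSet n d).filter (fun y => edgeOf k y i = edgeOf k y j)).card : ℝ)
        / ((permSet n d).card : ℝ)
      ≤ ((Nat.factorial k : ℝ)) ^ 2 * (n : ℝ) ^ k * (d : ℝ) ^ (2 * k)
        / ((n * d).descFactorial (2 * k) : ℝ) := by
  have hblock : ∀ {a}, a < m → k * a + k ≤ n * d := fun ha => by
    rw [hm, ← Nat.mul_succ]
    exact Nat.mul_le_mul_left k ha
  let e₀ := edgePairEmbedding (hblock hi) (hblock hj) hij
  have hfilter : (permSet n d).filter (fun y => edgeOf k y i = edgeOf k y j)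
      = (permSet n d).filter (fun y => univ.val.map (y ∘ e₀ ∘ Sum.inl)
          = univ.val.map (y ∘ e₀ ∘ Sum.inr)) :=
    filter_congr fun y _ => by
      rw [edgeOf_eq_map_edgePos (hblock hi), edgeOf_eq_map_edgePos (hblock hj)]
      rfl
  have hcount := card_filter_comp_mul_descFactorial_le
    (fun w : Fin k ⊕ Fin k → Fin n => univ.val.map (w ∘ Sum.inl) = univ.val.map (w ∘ Sum.inr))
    (fun _ => comp_perm_mem_permSet) (fun _ hy => (mem_filter.mp hy).2) e₀
  have hpairs := card_filter_map_inl_eq_map_inr_le (ι := Fin k) (α := Fin n)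
  simp only [Fintype.card_fin, Fintype.card_sum, ← two_mul] at hcount hpairs
  have hD : 0 < (n * d).descFactorial (2 * k) := by
    have : Nonempty (Fin k ⊕ Fin k ↪ Fin (n * d)) := ⟨e₀⟩
    simpa [Fintype.card_embedding_eq, ← two_mul] using
      Fintype.card_pos (α := Fin k ⊕ Fin k ↪ Fin (n * d))
  rw [hfilter]
  exact_mod_cast natCast_div_le_div_of_mul_le hD <| hcount.trans <|
    Nat.mul_le_mul_left _ <| Nat.mul_le_mul_right _ <| hpairs.trans <| by
      rw [sq, mul_assoc, mul_comm (n ^ k)]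
      exact Nat.le_mul_of_pos_left _ k.factorial_pos

/-- For a uniformly random permutation `Y` of the multiset with `d` copies of each element
of `[n]`, and two fixed distinct edge positions `i ≠ j`, the probability that the `i`-th
and `j`-th edges of `Y` are identical as multisets is at most
`(k!)^2 * n^k * d^(2k) / (nd)_{2k}`. -/
theorem stmt2 (n d k m : ℕ) (hk : 2 ≤ k) (hn : 1 ≤ n) (hd : 1 ≤ d) (hm : n * d = k * m)
    (hm2 : 2 ≤ m) (i j : ℕ) (hi : i < m) (hj : j < m) (hij : i ≠ j) :
    (((permSet n d).filter (fun y => edgeOf k y i = edgeOf k y j)).card : ℝ)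
        / ((permSet n d).card : ℝ)
      ≤ ((Nat.factorial k : ℝ)) ^ 2 * (n : ℝ) ^ k * (d : ℝ) ^ (2 * k)
        / ((n * d).descFactorial (2 * k) : ℝ) :=
  stmt2_general n d k m hm i j hi hj hij
end

section
/- Let λ(Y) denote the number of edges of Y that are simple loops (one vertex of multiplicity exactly 2, all others multiplicity 1 and distinct). Then E[λ(Y)] = (nd/k) * binom(k,2) * (n)_{k-1} * (d)_2 * d^{k-2} / (nd)_k, and consequently E[λ(Y)] → (k-1)(d-1)/2 as n → ∞ for fixed k ≥ 3 and fixed d. -/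
/-!
Numbering the `n * d` positions so that position `i` holds copy `i % d` of vertex `i / d`, the
uniform multiset permutation `Y` is `Fin.divNat ∘ σ` for a uniform permutation `σ`: every
rearrangement of `Fin.divNat` has the same number of preimages. Under a uniform `σ` the positions
of each block are sent to a uniform injective `k`-tuple, so by linearity `E λ = m A / (nd)_k`, where
`A` counts injective `x : Fin k → Fin n × Fin d` whose vertex pattern `w = Prod.fst ∘ x` is a
simple loop. Such a `w` has exactly one collision `w p = w q` and is injective off `q`:
`C(k,2) (n)_{k-1}` choices. The copies `o = Prod.snd ∘ x` make `x` injective iff `o p ≠ o q`: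
`d^k - d^{k-1} = (d)_2 d^{k-2}` choices. The limit follows from `(n)_j ~ n^j`.
-/

open Finset

theorem sum_comp_div_card_eq_of_transitive {α β : Type*} [Fintype α] [Nonempty α]
    [DecidableEq β] (f : α → β) (t : Finset β)
    (hf : ∀ a, f a ∈ t)
    (htrans : ∀ b ∈ t, ∀ b' ∈ t, ∃ g : α ≃ α, ∀ a, f (g a) = b' ↔ f a = b) (F : β → ℝ) :
    (∑ a, F (f a)) / Fintype.card α = (∑ b ∈ t, F b) / #t := by
  obtain ⟨a₀⟩ := ‹Nonempty α›
  set c := #{a | f a = f a₀}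
  have hfib : ∀ b ∈ t, #{a | f a = b} = c := fun b hb => by
    obtain ⟨g, hg⟩ := htrans b hb (f a₀) (hf a₀)
    exact card_equiv g fun a => by simp [hg]
  have hc : (c : ℝ) ≠ 0 := by
    exact_mod_cast (card_pos.mpr ⟨a₀, by simp⟩).ne'
  have hsum : ∑ a, F (f a) = c * ∑ b ∈ t, F b := by
    rw [← sum_fiberwise_of_maps_to (fun a _ => hf a), mul_sum]
    refine sum_congr rfl fun b hb => ?_
    rw [sum_congr rfl fun a ha => by rw [(mem_filter.mp ha).2], sum_const, hfib b hb,
      nsmul_eq_mul]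
  have hcard : Fintype.card α = #t * c := by
    rw [← card_univ, card_eq_sum_card_fiberwise fun a _ => hf a, sum_congr rfl hfib,
      sum_const, smul_eq_mul]
  rw [hsum, hcard]
  push_cast
  field_simp

section Permutations

open Equiv

variable {X : Type*} [Fintype X] [DecidableEq X]

def rearrangements {Y : Type*} [Fintype Y] [DecidableEq Y] (f : X → Y) : Finset (X → Y) :=
  {y | ∀ c, #{a | y a = c} = #{a | f a = c}}

theorem sum_rearrangements_div_card {Y : Type*} [Fintype Y] [DecidableEq Y] (f : X → Y)
    (F : (X → Y) → ℝ) :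
    (∑ y ∈ rearrangements f, F y) / #(rearrangements f)
      = (∑ σ : Perm X, F (f ∘ σ)) / (Fintype.card X).factorial := by
  rw [← Fintype.card_perm]
  refine (sum_comp_div_card_eq_of_transitive (fun σ : Perm X => f ∘ σ) _ (fun σ => ?_)
    (fun y hy y' hy' => ?_) F).symm
  · simp only [rearrangements, mem_filter, mem_univ, true_and]
    exact fun c => card_equiv σ (by simp)
  · simp only [rearrangements, mem_filter, mem_univ, true_and] at hy hy'
    obtain ⟨e, he⟩ : ∃ e : Perm X, ∀ a, y' (e a) = y a :=
      ⟨ofFiberEquiv fun c => Fintype.equivOfCardEq (by simp [Fintype.card_subtype, hy, hy']),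
        ofFiberEquiv_map _⟩
    refine ⟨Equiv.mulRight e⁻¹, fun σ => ?_⟩
    simp only [coe_mulRight, Perm.coe_mul, Perm.coe_inv]
    constructor
    · intro h; funext a; simpa [he] using congrFun h (e a)
    · intro h; funext a; simpa [← h] using (he (e.symm a)).symm

theorem sum_injective_div_descFactorial {ι : Type*} [Fintype ι] [DecidableEq ι] {b : ι → X}
    (hb : Function.Injective b) (F : (ι → X) → ℝ) :
    (∑ x ∈ ({x | Function.Injective x} : Finset (ι → X)), F x)
        / (Fintype.card X).descFactorial (Fintype.card ι)
      = (∑ σ : Perm X, F (σ ∘ b)) / (Fintype.card X).factorial := by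
  have hcard : #({x | Function.Injective x} : Finset (ι → X))
      = (Fintype.card X).descFactorial (Fintype.card ι) := by
    rw [← Fintype.card_embedding_eq, ← Fintype.card_subtype,
      Fintype.card_congr (subtypeInjectiveEquivEmbedding ι X)]
  rw [← Fintype.card_perm, ← hcard]
  refine (sum_comp_div_card_eq_of_transitive (fun σ : Perm X => σ ∘ b) _
    (fun σ => by simpa using σ.injective.comp hb) (fun x hx x' hx' => ?_) F).symm
  simp only [mem_filter, mem_univ, true_and] at hx hx'
  obtain ⟨ρ, hρ⟩ := Perm.exists_extending_pair x x' hx hx'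
  refine ⟨Equiv.mulLeft ρ, fun σ => ?_⟩
  have hρx : ⇑ρ ∘ x = x' := funext hρ
  simp only [coe_mulLeft, Perm.coe_mul]
  rw [← hρx, Function.comp_assoc]
  exact ρ.injective.comp_left.eq_iff

end Permutations

section Blocks

variable {n d k : ℕ}

def blockPos {N i : ℕ} (hi : i < N / k) (j : Fin k) : Fin N :=
  ⟨k * i + j, calc
    k * i + j < k * (i + 1) := by rw [mul_add_one]; omega
    _ ≤ k * (N / k) := Nat.mul_le_mul_left k hi
    _ ≤ N := Nat.mul_div_le N k⟩

theorem blockPos_injective {N i : ℕ} (hi : i < N / k) : Function.Injective (blockPos hi) :=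
  fun j j' h => Fin.ext (by simpa [blockPos] using h)

theorem edgeOf_eq_map (y : Fin (n * d) → Fin n) {i : ℕ} (hi : i < n * d / k) :
    edgeOf k y i = univ.val.map (y ∘ blockPos hi) := by
  have hrange : (range k).val = univ.val.map (Fin.val : Fin k → ℕ) := by
    rw [Fin.univ_val_map, List.ofFn_eq_map, List.map_coe_finRange_eq_range]
    rfl
  rw [edgeOf, hrange, Multiset.filterMap_map, ← Multiset.filterMap_eq_map]
  congr 1
  funext j
  exact dif_pos (blockPos hi j).isLt

theorem sum_numSimpleLoops_comp_perm_div (f : Fin (n * d) → Fin n) :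
    (∑ σ : Equiv.Perm (Fin (n * d)), (numSimpleLoops k (f ∘ σ) : ℝ)) / (n * d).factorial
      = (n * d / k : ℕ) * #{x : Fin k → Fin (n * d) |
          Function.Injective x ∧ isSimpleLoop (univ.val.map (f ∘ x))}
        / (n * d).descFactorial k := by
  conv_lhs => simp only [numSimpleLoops, card_filter, Nat.cast_sum, Nat.cast_ite, Nat.cast_one,
    Nat.cast_zero]
  rw [sum_comm, sum_div, sum_congr rfl fun i hi => ?_, sum_const, card_range, nsmul_eq_mul,
    mul_div_assoc]
  have hi : i < n * d / k := mem_range.mp hi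
  simp only [edgeOf_eq_map _ hi, Function.comp_assoc]
  have h := sum_injective_div_descFactorial (blockPos_injective hi)
    (fun x => if isSimpleLoop (univ.val.map (f ∘ x)) then (1 : ℝ) else 0)
  simp only [Fintype.card_fin] at h
  rw [← h, sum_boole, filter_filter]

end Blocks

section Collisions

variable {ι α : Type*} {p q : ι}

theorem injOn_compl_singleton_swap {w : ι → α} (hpq : p ≠ q) (hw : w p = w q)
    (hinj : Set.InjOn w {q}ᶜ) : Set.InjOn w {p}ᶜ := by
  have key : ∀ j, j ≠ p → w j = w q → j = q := fun j hjp h => by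
    by_contra hjq
    exact hjp (hinj hjq hpq (h.trans hw.symm))
  intro j₁ hj₁ j₂ hj₂ h
  simp only [Set.mem_compl_iff, Set.mem_singleton_iff] at hj₁ hj₂
  by_cases h₁ : j₁ = q
  · subst h₁; exact (key j₂ hj₂ h.symm).symm
  by_cases h₂ : j₂ = q
  · subst h₂; exact key j₁ hj₁ h
  exact hinj h₁ h₂ h

theorem injective_prodMk_iff {β : Type*} {w : ι → α} (o : ι → β) (hpq : p ≠ q) (hw : w p = w q)
    (hinj : Set.InjOn w {q}ᶜ) : Function.Injective (fun j => (w j, o j)) ↔ o p ≠ o q := by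
  constructor
  · intro h ho
    exact hpq (h (Prod.ext hw ho))
  · intro ho j₁ j₂ h
    simp only [Prod.mk.injEq] at h
    have key : ∀ j, j ≠ q → w j = w q → j = p := fun j hj h => hinj hj hpq (h.trans hw.symm)
    by_contra hne
    by_cases h₁ : j₁ = q
    · subst h₁
      rw [key j₂ (Ne.symm hne) h.1.symm] at h
      exact ho h.2.symm
    by_cases h₂ : j₂ = q
    · subst h₂
      rw [key j₁ hne h.1] at h
      exact ho h.2
    exact hne (hinj h₁ h₂ h.1)

variable [Fintype ι] [DecidableEq ι] [DecidableEq α]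

theorem two_le_card_fiber {w : ι → α} {j j' : ι} (hne : j ≠ j') (h : w j = w j') :
    2 ≤ #{a | w a = w j} := by
  rw [← card_pair hne]
  refine card_le_card fun a ha => ?_
  rcases mem_insert.mp ha with rfl | ha
  · simp
  · simp [mem_singleton.mp ha, h]

def collisionSet (w : ι → α) : Finset ι := {j | ∃ j', j' ≠ j ∧ w j' = w j}

theorem collisionSet_eq_pair {w : ι → α} (hpq : p ≠ q) (hw : w p = w q)
    (hinj : Set.InjOn w {q}ᶜ) : collisionSet w = {p, q} := by
  ext j
  simp only [collisionSet, mem_filter, mem_univ, true_and, mem_insert, mem_singleton]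
  constructor
  · rintro ⟨j', hj', h⟩
    by_contra! hj
    by_cases hj'q : j' = q
    · exact hj.1 (hinj hj.2 hpq (h.symm.trans (hj'q ▸ hw.symm)))
    · exact hj' (hinj hj'q hj.2 h)
  · rintro (rfl | rfl)
    exacts [⟨q, hpq.symm, hw.symm⟩, ⟨p, hpq, hw⟩]

end Collisions

section SimpleLoops

theorem count_map_univ {ι : Type*} [Fintype ι] {n : ℕ} (w : ι → Fin n) (v : Fin n) :
    (univ.val.map w).count v = #{j | w j = v} := by
  simp [Multiset.count_map, card_def, filter_val, eq_comm]

variable {ι : Type*} [Fintype ι] [DecidableEq ι] {n : ℕ} {p q : ι}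

theorem isSimpleLoop_iff_exists_count (e : Multiset (Fin n)) :
    isSimpleLoop e ↔ ∃ v, e.count v = 2 ∧ ∀ u, u ≠ v → e.count u ≤ 1 := by
  unfold isSimpleLoop
  constructor
  · rintro ⟨hone, hle⟩
    obtain ⟨v, hv⟩ := card_eq_one.mp hone
    have hmem : ∀ u, e.count u = 2 ↔ u = v := fun u => by
      simpa using congrArg (u ∈ ·) hv
    refine ⟨v, (hmem v).mpr rfl, fun u hu => ?_⟩
    have := hle u
    have := (hmem u).not.mpr hu
    omega
  · rintro ⟨v, hv, hle⟩
    refine ⟨card_eq_one.mpr ⟨v, ?_⟩, fun u => ?_⟩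
    · ext u
      by_cases hu : u = v
      · simp [hu, hv]
      · have := hle u hu
        simp only [mem_filter, mem_univ, true_and, mem_singleton, hu, iff_false]
        omega
    · by_cases hu : u = v
      · rw [hu, hv]
      · exact (hle u hu).trans (by norm_num)

theorem isSimpleLoop_map_iff (w : ι → Fin n) :
    isSimpleLoop (univ.val.map w) ↔ ∃ p q, p ≠ q ∧ w p = w q ∧ Set.InjOn w {q}ᶜ := by
  simp only [isSimpleLoop_iff_exists_count, count_map_univ]
  constructor
  · rintro ⟨v, hv, hle⟩
    obtain ⟨p, q, hpq, hfib⟩ := card_eq_two.mp hv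
    have hfib' : ∀ j, w j = v ↔ j = p ∨ j = q := fun j => by
      simpa using congrArg (j ∈ ·) hfib
    refine ⟨p, q, hpq, ((hfib' p).mpr (.inl rfl)).trans ((hfib' q).mpr (.inr rfl)).symm,
      fun j₁ hj₁ j₂ hj₂ h => ?_⟩
    by_contra hne
    have hv₁ : w j₁ = v := by
      by_contra hv₁
      exact absurd (hle _ hv₁) (by have := two_le_card_fiber hne h; omega)
    simp only [Set.mem_compl_iff, Set.mem_singleton_iff] at hj₁ hj₂
    have h₁ := ((hfib' j₁).mp hv₁).resolve_right hj₁
    have h₂ := ((hfib' j₂).mp (h ▸ hv₁)).resolve_right hj₂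
    exact hne (h₁.trans h₂.symm)
  · rintro ⟨p, q, hpq, hw, hinj⟩
    have hfib : ∀ u, u ≠ w q → #{j | w j = u} ≤ 1 := fun u hu => card_le_one.mpr
      fun j₁ h₁ j₂ h₂ => by
        simp only [mem_filter, mem_univ, true_and] at h₁ h₂
        exact hinj (by rintro rfl; exact hu h₁.symm) (by rintro rfl; exact hu h₂.symm)
          (h₁.trans h₂.symm)
    refine ⟨w q, ?_, hfib⟩
    rw [← card_pair hpq]
    congr 1
    ext j
    simp only [mem_filter, mem_univ, true_and, mem_insert, mem_singleton]
    constructor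
    · intro h
      by_cases hjq : j = q
      · exact .inr hjq
      · exact .inl (hinj hjq hpq (h.trans hw.symm))
    · rintro (rfl | rfl)
      exacts [hw, rfl]

theorem isSimpleLoop_map_and_collisionSet_eq_pair_iff {w : ι → Fin n} (hpq : p ≠ q) :
    isSimpleLoop (univ.val.map w) ∧ collisionSet w = {p, q} ↔
      w p = w q ∧ Set.InjOn w {q}ᶜ := by
  constructor
  · rintro ⟨hloop, hcoll⟩
    obtain ⟨p', q', hpq', hw, hinj⟩ := (isSimpleLoop_map_iff w).mp hloop
    rw [collisionSet_eq_pair hpq' hw hinj] at hcoll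
    have hp : p ∈ ({p', q'} : Finset ι) := by rw [hcoll]; simp
    have hq : q ∈ ({p', q'} : Finset ι) := by rw [hcoll]; simp
    simp only [mem_insert, mem_singleton] at hp hq
    rcases hp with rfl | rfl
    · rcases hq with rfl | rfl
      exacts [absurd rfl hpq, ⟨hw, hinj⟩]
    · rcases hq with rfl | rfl
      exacts [⟨hw.symm, injOn_compl_singleton_swap hpq' hw hinj⟩, absurd rfl hpq]
  · rintro ⟨hw, hinj⟩
    exact ⟨(isSimpleLoop_map_iff w).mpr ⟨p, q, hpq, hw, hinj⟩, collisionSet_eq_pair hpq hw hinj⟩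

end SimpleLoops

def funEqAtEquiv {ι α : Type*} [DecidableEq ι] {p q : ι} (hpq : p ≠ q) :
    {f : ι → α // f p = f q} ≃ (({q}ᶜ : Set ι) → α) where
  toFun f j := f.1 j
  invFun g := ⟨fun j => if h : j = q then g ⟨p, hpq⟩ else g ⟨j, h⟩, by simp [hpq]⟩
  left_inv f := by
    ext j
    by_cases h : j = q
    · subst h; simp [f.2]
    · simp [h]
  right_inv g := funext fun j => dif_neg j.2

section Counting

variable {ι α β : Type*} [Fintype ι] [DecidableEq ι] [Fintype α] [Fintype β] {p q : ι}

theorem card_compl_singleton (q : ι) : Fintype.card (({q}ᶜ : Set ι)) = Fintype.card ι - 1 := by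
  simp [filter_ne']

theorem card_filter_apply_eq_apply [DecidableEq α] (hpq : p ≠ q) :
    #{f : ι → α | f p = f q} = Fintype.card α ^ (Fintype.card ι - 1) := by
  rw [← Fintype.card_subtype, Fintype.card_congr (funEqAtEquiv hpq), Fintype.card_fun,
    card_compl_singleton]

open Classical in
theorem card_filter_apply_eq_apply_and_injOn [DecidableEq α] (hpq : p ≠ q) :
    #{f : ι → α | f p = f q ∧ Set.InjOn f {q}ᶜ}
      = (Fintype.card α).descFactorial (Fintype.card ι - 1) := by
  rw [← Fintype.card_subtype, ← card_compl_singleton q, ← Fintype.card_embedding_eq]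
  exact Fintype.card_congr <| (Equiv.subtypeSubtypeEquivSubtypeInter _ _).symm.trans <|
    ((funEqAtEquiv hpq).subtypeEquiv fun _ => Set.injOn_iff_injective).trans
      (Equiv.subtypeInjectiveEquivEmbedding _ _)

theorem card_filter_apply_ne_apply [DecidableEq β] (hpq : p ≠ q) :
    #{o : ι → β | o p ≠ o q}
      = Fintype.card β ^ Fintype.card ι - Fintype.card β ^ (Fintype.card ι - 1) := by
  have h := card_filter_add_card_filter_not (s := (univ : Finset (ι → β))) (fun o => o p = o q)
  rw [card_filter_apply_eq_apply hpq, card_univ, Fintype.card_fun] at h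
  simp only [ne_eq]
  omega

theorem card_simpleLoop_patterns {n : ℕ} :
    #{w : ι → Fin n | isSimpleLoop (univ.val.map w)}
      = (Fintype.card ι).choose 2 * n.descFactorial (Fintype.card ι - 1) := by
  classical
  rw [card_eq_sum_card_fiberwise (f := collisionSet) (t := powersetCard 2 univ) ?_,
    sum_const_nat fun P hP => ?_, card_powersetCard, card_univ]
  · obtain ⟨p, q, hpq, rfl⟩ := card_eq_two.mp (mem_powersetCard.mp hP).2
    rw [filter_filter, filter_congr fun w _ => isSimpleLoop_map_and_collisionSet_eq_pair_iff hpq,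
      card_filter_apply_eq_apply_and_injOn hpq, Fintype.card_fin]
  · intro w hw
    obtain ⟨p, q, hpq, hw, hinj⟩ := (isSimpleLoop_map_iff w).mp (mem_filter.mp hw).2
    rw [collisionSet_eq_pair hpq hw hinj, mem_coe, mem_powersetCard]
    exact ⟨subset_univ _, card_pair hpq⟩

theorem card_injective_and_isSimpleLoop_fst [DecidableEq β] {n : ℕ} :
    #{x : ι → Fin n × β | Function.Injective x ∧ isSimpleLoop (univ.val.map (Prod.fst ∘ x))}
      = #{w : ι → Fin n | isSimpleLoop (univ.val.map w)}
        * (Fintype.card β ^ Fintype.card ι - Fintype.card β ^ (Fintype.card ι - 1)) := by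
  rw [card_eq_sum_card_fiberwise (f := (Prod.fst ∘ ·)) (t := {w | isSimpleLoop (univ.val.map w)})
    fun x hx => by simpa using (mem_filter.mp hx).2.2, sum_const_nat fun w hloop => ?_]
  obtain ⟨p, q, hpq, hw, hinj⟩ := (isSimpleLoop_map_iff w).mp (mem_filter.mp hloop).2
  rw [← card_filter_apply_ne_apply hpq]
  refine card_nbij' (Prod.snd ∘ ·) (fun o j => (w j, o j)) (fun x hx => ?_) (fun o ho => ?_)
    (fun x hx => ?_) (fun o _ => rfl)
  · simp only [coe_filter, mem_filter, mem_univ, true_and, Set.mem_ofPred_eq] at hx ⊢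
    obtain ⟨⟨hx, -⟩, rfl⟩ := hx
    exact (injective_prodMk_iff _ hpq hw hinj).mp hx
  · simp only [coe_filter, mem_filter, mem_univ, true_and, Set.mem_ofPred_eq] at ho ⊢
    exact ⟨⟨(injective_prodMk_iff _ hpq hw hinj).mpr ho, (mem_filter.mp hloop).2⟩, rfl⟩
  · simp only [coe_filter, mem_filter, mem_univ, true_and, Set.mem_ofPred_eq] at hx
    obtain ⟨-, rfl⟩ := hx
    rfl

end Counting

theorem card_injective_and_isSimpleLoop_divNat {n d k : ℕ} :
    #{x : Fin k → Fin (n * d) |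
        Function.Injective x ∧ isSimpleLoop (univ.val.map (Fin.divNat ∘ x))}
      = k.choose 2 * n.descFactorial (k - 1) * (d ^ k - d ^ (k - 1)) := by
  have h := card_injective_and_isSimpleLoop_fst (ι := Fin k) (β := Fin d) (n := n)
  rw [card_simpleLoop_patterns] at h
  simp only [Fintype.card_fin] at h
  rw [← h]
  refine card_equiv (Equiv.arrowCongr (.refl _) finProdFinEquiv.symm) fun x => ?_
  simp only [mem_filter, mem_univ, true_and]
  show _ ↔ Function.Injective (finProdFinEquiv.symm ∘ x) ∧ _
  rw [EquivLike.comp_injective]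
  rfl

theorem card_filter_divNat_eq {n d : ℕ} (v : Fin n) : #{i : Fin (n * d) | i.divNat = v} = d := by
  rw [card_equiv finProdFinEquiv.symm (t := {v} ×ˢ univ) fun i => by
    simp [finProdFinEquiv, eq_comm]]
  simp

theorem permSet_eq_rearrangements (n d : ℕ) :
    permSet n d = rearrangements (Fin.divNat : Fin (n * d) → Fin n) := by
  ext y
  simp [permSet, rearrangements, card_filter_divNat_eq]

theorem pow_sub_pow_pred_eq_descFactorial_two_mul (d : ℕ) {k : ℕ} (hk : 2 ≤ k) :
    d ^ k - d ^ (k - 1) = d.descFactorial 2 * d ^ (k - 2) := by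
  obtain ⟨j, rfl⟩ : ∃ j, k = j + 2 := ⟨k - 2, by omega⟩
  rw [Nat.add_sub_cancel, show j + 2 - 1 = j + 1 from rfl, Nat.descFactorial_succ,
    Nat.descFactorial_one, pow_succ, pow_succ, ← Nat.mul_sub_one]
  ring

theorem expected_numSimpleLoops {n d k m : ℕ} (hk : 2 ≤ k) (hm : n * d = k * m) :
    (∑ y ∈ permSet n d, (numSimpleLoops k y : ℝ)) / #(permSet n d)
      = m * k.choose 2 * n.descFactorial (k - 1) * d.descFactorial 2 * d ^ (k - 2)
        / (n * d).descFactorial k := by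
  rw [permSet_eq_rearrangements, sum_rearrangements_div_card, Fintype.card_fin,
    sum_numSimpleLoops_comp_perm_div, card_injective_and_isSimpleLoop_divNat,
    pow_sub_pow_pred_eq_descFactorial_two_mul d hk, hm, Nat.mul_div_cancel_left m (by omega)]
  push_cast
  ring

open Filter Asymptotics in
theorem tendsto_mul_descFactorial_div_descFactorial {d : ℕ} (hd : 1 ≤ d) (j : ℕ) :
    Tendsto (fun n : ℕ => (n : ℝ) * n.descFactorial j / (n * d).descFactorial (j + 1))
      atTop (nhds (1 / (d : ℝ) ^ (j + 1))) := by
  have hnd : Tendsto (fun n : ℕ => n * d) atTop atTop :=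
    tendsto_atTop_mono (fun n => Nat.le_mul_of_pos_right n hd) tendsto_id
  have hden : (fun n : ℕ => ((n * d).descFactorial (j + 1) : ℝ))
      ~[atTop] fun n => ((n : ℝ) * d) ^ (j + 1) := by
    simpa [Function.comp_def] using (isEquivalent_descFactorial (j + 1)).comp_tendsto hnd
  have hnum : (fun n : ℕ => (n : ℝ) * n.descFactorial j) ~[atTop] fun n => (n : ℝ) * n ^ j :=
    IsEquivalent.refl.mul (isEquivalent_descFactorial j)
  refine (hnum.div hden).symm.tendsto_nhds (tendsto_const_nhds.congr' ?_)
  filter_upwards [eventually_ge_atTop 1] with n hn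
  have : (n : ℝ) ≠ 0 := by positivity
  have : (d : ℝ) ≠ 0 := by positivity
  simp only [Pi.div_apply]
  field_simp
  ring

open Filter in
theorem tendsto_expected_numSimpleLoops {k d : ℕ} (hk : 2 ≤ k) (hd : 1 ≤ d) :
    Tendsto
      (fun n : ℕ => ((n * d : ℝ) / (k : ℝ)) * (k.choose 2 : ℝ)
        * (n.descFactorial (k - 1) : ℝ) * (d.descFactorial 2 : ℝ) * (d : ℝ) ^ (k - 2)
        / ((n * d).descFactorial k : ℝ))
      atTop (nhds (((k : ℝ) - 1) * ((d : ℝ) - 1) / 2)) := by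
  obtain ⟨j, rfl⟩ : ∃ j, k = j + 2 := ⟨k - 2, by omega⟩
  have hd' : (d : ℝ) ≠ 0 := by positivity
  convert (tendsto_mul_descFactorial_div_descFactorial hd (j + 1)).const_mul
    ((d : ℝ) * (j + 2).choose 2 * d.descFactorial 2 * d ^ j / (j + 2)) using 1
  · funext n
    push_cast
    ring
  · congr 1
    rw [Nat.cast_choose_two, Nat.cast_descFactorial_two]
    push_cast
    field_simp
    ring

/-- For fixed `k ≥ 3` and fixed `d ≥ 1`: (a) for every admissible `n` (with `n*d = k*m`),
the expected number of simple loops of a uniformly random permutation `Y` equals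
`m * C(k,2) * (n)_{k-1} * (d)_2 * d^{k-2} / (nd)_k`; (b) this quantity (with `m = nd/k`)
tends to `(k-1)(d-1)/2` as `n → ∞`. -/
theorem stmt6 (k d : ℕ) (hk : 3 ≤ k) (hd : 1 ≤ d) :
    (∀ n m : ℕ, k ≤ n → n * d = k * m →
      (∑ y ∈ permSet n d, (numSimpleLoops k y : ℝ)) / ((permSet n d).card : ℝ)
        = (m : ℝ) * (k.choose 2 : ℝ) * (n.descFactorial (k - 1) : ℝ)
            * (d.descFactorial 2 : ℝ) * (d : ℝ) ^ (k - 2)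
            / ((n * d).descFactorial k : ℝ)) ∧
    Filter.Tendsto
      (fun n : ℕ => ((n * d : ℝ) / (k : ℝ)) * (k.choose 2 : ℝ)
        * (n.descFactorial (k - 1) : ℝ) * (d.descFactorial 2 : ℝ) * (d : ℝ) ^ (k - 2)
        / ((n * d).descFactorial k : ℝ))
      Filter.atTop (nhds (((k : ℝ) - 1) * ((d : ℝ) - 1) / 2)) :=
  ⟨fun _ _ _ hm => expected_numSimpleLoops (by omega) hm,
    tendsto_expected_numSimpleLoops (by omega) hd⟩
end

section
/- For i ≠ j, the covariance of the indicators that the i-th and j-th edges of Y are simple loops satisfies Cov(I_i, I_j) ≤ binom(k,2)^2 * (n)_{k-1}^2 * (d)_2^2 * d^{2k-4} * ((nd)_k - (nd-k)_k) / ((nd)_{2k} * (nd)_k). -/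
/-!
Let `y` be uniform among the sequences of length `N = nd` in which each of the `n` symbols occurs
`d` times. For distinct positions `p : Fin r → Fin N`, the probability that `y ∘ p = s` is
`∏ v, (d)_(occ s v) / (N)_r`: prescribing one more position `q` multiplies the count by
`(d - occ s v) / (N - r)`, because transpositions of free positions show that the count does not
depend on `q`, and double counting over all free `q` gives the factor `d - occ s v`.
Summing over simple-loop patterns gives `P(I_i) = L / (nd)_k`, where `L = ∑ ∏ v, (d)_(occ s v)`,
and, since the blocks `i` and `j` are disjoint and `(d)_(a+b) ≤ (d)_a (d)_b`,
`P(I_i I_j) ≤ L² / (nd)_(2k)`. As `(nd)_(2k) = (nd)_k (nd-k)_k`, the covariance is at most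
`L² ((nd)_k - (nd-k)_k) / ((nd)_(2k) (nd)_k)`. Finally every loop pattern has weight
`(d)_2 d^(k-2)`, and it is determined by its two repeated positions together with an injection
of the remaining `k - 1` positions into the `n` symbols, so `L ≤ C(k,2) (n)_(k-1) (d)_2 d^(k-2)`.
-/

open Finset

lemma Nat.descFactorial_add_le_mul (d a b : ℕ) :
    d.descFactorial (a + b) ≤ d.descFactorial a * d.descFactorial b := by
  rw [← Nat.descFactorial_mul_descFactorial (Nat.le_add_right a b), Nat.add_sub_cancel_left,
    mul_comm]
  exact Nat.mul_le_mul_left _ (Nat.descFactorial_le _ (Nat.sub_le d a))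

lemma comp_snoc_eq_snoc_iff {α β : Type*} {r : ℕ} (y : α → β) (p : Fin r → α) (q : α)
    (s : Fin r → β) (v : β) :
    y ∘ Fin.snoc p q = Fin.snoc s v ↔ y ∘ p = s ∧ y q = v := by
  rw [Fin.comp_snoc, Fin.snoc_inj]

lemma swap_comp_snoc {α : Type*} [DecidableEq α] {r : ℕ} {p : Fin r → α} {q q' : α}
    (hq : q ∉ Set.range p) (hq' : q' ∉ Set.range p) :
    Equiv.swap q q' ∘ Fin.snoc p q = Fin.snoc p q' := by
  rw [Fin.comp_snoc, Equiv.swap_apply_left]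
  congr
  funext t
  exact Equiv.swap_apply_of_ne_of_ne (fun h => hq ⟨t, h⟩) (fun h => hq' ⟨t, h⟩)

lemma comp_append {α β : Type*} {r r' : ℕ} (y : α → β) (p : Fin r → α)
    (p' : Fin r' → α) :
    y ∘ Fin.append p p' = Fin.append (y ∘ p) (y ∘ p') := by
  funext i
  refine Fin.addCases (fun a => ?_) (fun b => ?_) i <;> simp

section Occurrences

variable {ι β : Type*} [Fintype ι] [DecidableEq β]

def occ (s : ι → β) (v : β) : ℕ := #{t | s t = v}

lemma sum_occ [Fintype β] (s : ι → β) : ∑ v, occ s v = Fintype.card ι :=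
  (card_eq_sum_card_fiberwise fun _ _ => mem_univ (s _)).symm

lemma two_le_occ {s : ι → β} {t t' : ι} (h : t ≠ t') (hs : s t = s t') : 2 ≤ occ s (s t) :=
  one_lt_card.2 ⟨t, by simp, t', by simp [hs], h⟩

lemma count_map_univ_val (s : ι → β) (v : β) : (univ.val.map s).count v = occ s v := by
  rw [Multiset.count_map, occ, card_def, filter_val]
  exact congrArg _ (Multiset.filter_congr fun _ _ => eq_comm)

lemma occ_snoc {r : ℕ} (s : Fin r → β) (v w : β) :
    occ (Fin.snoc s v : Fin (r + 1) → β) w = occ s w + if v = w then 1 else 0 := by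
  rw [occ, occ, card_filter, card_filter, Fin.sum_univ_castSucc]
  simp

lemma occ_append {r r' : ℕ} (s : Fin r → β) (t : Fin r' → β) (v : β) :
    occ (Fin.append s t) v = occ s v + occ t v := by
  rw [occ, occ, occ, card_filter, card_filter, card_filter, Fin.sum_univ_add]
  simp only [Fin.append_left, Fin.append_right]

end Occurrences

section RegularMaps

variable {α β : Type*} [Fintype α] [DecidableEq α] [Fintype β] [DecidableEq β]

def patternWeight (d : ℕ) {r : ℕ} (s : Fin r → β) : ℕ := ∏ v, d.descFactorial (occ s v)

lemma patternWeight_snoc (d : ℕ) {r : ℕ} (s : Fin r → β) (v : β) :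
    patternWeight d (Fin.snoc s v : Fin (r + 1) → β) = (d - occ s v) * patternWeight d s := by
  simp only [patternWeight, occ_snoc]
  rw [← mul_prod_erase _ _ (mem_univ v), ← mul_prod_erase _ (fun w => d.descFactorial (occ s w))
    (mem_univ v), if_pos rfl, Nat.descFactorial_succ, mul_assoc]
  congr 2
  exact prod_congr rfl fun w hw => by rw [if_neg (ne_of_mem_erase hw).symm, add_zero]

lemma patternWeight_append_le (d : ℕ) {r r' : ℕ} (s : Fin r → β) (t : Fin r' → β) :
    patternWeight d (Fin.append s t) ≤ patternWeight d s * patternWeight d t := by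
  rw [patternWeight, patternWeight, patternWeight, ← prod_mul_distrib]
  exact prod_le_prod' fun v _ => occ_append s t v ▸ Nat.descFactorial_add_le_mul _ _ _

variable (α β) in
def regularMaps (d : ℕ) : Finset (α → β) := {y | ∀ v, occ y v = d}

lemma mem_regularMaps {d : ℕ} {y : α → β} :
    y ∈ regularMaps α β d ↔ ∀ v, occ y v = d := by
  simp [regularMaps]

lemma permSet_eq_regularMaps (n d : ℕ) : permSet n d = regularMaps (Fin (n * d)) (Fin n) d := by
  unfold permSet regularMaps occ
  congr

lemma regularMaps_nonempty {d : ℕ} (h : Fintype.card α = Fintype.card β * d) :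
    (regularMaps α β d).Nonempty := by
  obtain ⟨e⟩ : Nonempty (α ≃ β × Fin d) := Fintype.card_eq.1 (by simpa using h)
  refine ⟨Prod.fst ∘ e, mem_regularMaps.2 fun v => ?_⟩
  calc occ (Prod.fst ∘ e) v = #({v} ×ˢ (univ : Finset (Fin d))) :=
        card_equiv e fun a => by simp [eq_comm, Prod.ext_iff]
    _ = d := by simp

lemma comp_perm_mem_regularMaps {d : ℕ} {y : α → β} (σ : Equiv.Perm α)
    (hy : y ∈ regularMaps α β d) : y ∘ σ ∈ regularMaps α β d := by
  rw [mem_regularMaps] at hy ⊢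
  intro v
  rw [← hy v]
  exact card_equiv σ fun a => by simp

lemma card_comp_snoc_eq_of_notMem_range {d r : ℕ} {p : Fin r → α} {q q' : α}
    (hq : q ∉ Set.range p) (hq' : q' ∉ Set.range p) (s : Fin r → β) (v : β) :
    #{y ∈ regularMaps α β d | y ∘ Fin.snoc p q = Fin.snoc s v}
      = #{y ∈ regularMaps α β d | y ∘ Fin.snoc p q' = Fin.snoc s v} := by
  refine card_nbij' (· ∘ Equiv.swap q q') (· ∘ Equiv.swap q q') ?_ ?_ ?_ ?_
  · intro y hy
    simp only [coe_filter, Set.mem_ofPred_eq] at hy ⊢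
    refine ⟨comp_perm_mem_regularMaps _ hy.1, ?_⟩
    rw [Function.comp_assoc, ← Equiv.swap_comm, swap_comp_snoc hq' hq, hy.2]
  · intro y hy
    simp only [coe_filter, Set.mem_ofPred_eq] at hy ⊢
    refine ⟨comp_perm_mem_regularMaps _ hy.1, ?_⟩
    rw [Function.comp_assoc, swap_comp_snoc hq hq', hy.2]
  · intro y _; funext a; simp
  · intro y _; funext a; simp

lemma sum_card_comp_snoc {d r : ℕ} {p : Fin r → α} (hp : p.Injective) (s : Fin r → β)
    (v : β) :
    ∑ q ∈ (univ.image p)ᶜ, #{y ∈ regularMaps α β d | y ∘ Fin.snoc p q = Fin.snoc s v}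
      = (d - occ s v) * #{y ∈ regularMaps α β d | y ∘ p = s} := by
  set E := {y ∈ regularMaps α β d | y ∘ p = s}
  have hfiber (q : α) : #{y ∈ regularMaps α β d | y ∘ Fin.snoc p q = Fin.snoc s v}
      = #{y ∈ E | y q = v} := by
    simp only [E, filter_filter, comp_snoc_eq_snoc_iff]
  have hall : ∑ q, #{y ∈ E | y q = v} = d * #E := by
    have := sum_card_bipartiteAbove_eq_sum_card_bipartiteBelow (s := univ) (t := E)
      (r := fun q y => y q = v)
    simp only [bipartiteAbove, bipartiteBelow] at this
    rw [this, mul_comm]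
    exact sum_const_nat fun y hy => mem_regularMaps.1 (mem_filter.1 hy).1 v
  have himage : ∑ q ∈ univ.image p, #{y ∈ E | y q = v} = occ s v * #E := by
    have (t : Fin r) : {y ∈ E | y (p t) = v} = {y ∈ E | s t = v} :=
      filter_congr fun y hy => by rw [← (mem_filter.1 hy).2, Function.comp_apply]
    simp only [sum_image hp.injOn, this, filter_const, apply_ite card, card_empty]
    rw [← sum_filter, sum_const, smul_eq_mul]
    rfl
  simp only [hfiber]
  have := sum_compl_add_sum (univ.image p) fun q => #{y ∈ E | y q = v}
  rw [Nat.sub_mul]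
  omega

theorem card_comp_eq_mul_descFactorial (d : ℕ) {r : ℕ} {p : Fin r → α} (hp : p.Injective)
    (s : Fin r → β) :
    #{y ∈ regularMaps α β d | y ∘ p = s} * (Fintype.card α).descFactorial r
      = #(regularMaps α β d) * patternWeight d s := by
  induction r with
  | zero =>
    rw [filter_true_of_mem fun y _ => Subsingleton.elim _ _]
    simp [patternWeight, occ]
  | succ r ih =>
    obtain ⟨p, q, rfl⟩ : ∃ p₀ q, p = Fin.snoc p₀ q :=
      ⟨Fin.init p, p (Fin.last r), (Fin.snoc_init_self p).symm⟩
    obtain ⟨s, v, rfl⟩ : ∃ s₀ v, s = Fin.snoc s₀ v :=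
      ⟨Fin.init s, s (Fin.last r), (Fin.snoc_init_self s).symm⟩
    obtain ⟨hp, hq⟩ := Fin.snoc_injective_iff.1 hp
    have hcount : (Fintype.card α - r)
          * #{y ∈ regularMaps α β d | y ∘ Fin.snoc p q = Fin.snoc s v}
        = (d - occ s v) * #{y ∈ regularMaps α β d | y ∘ p = s} := by
      rw [← sum_card_comp_snoc hp, sum_const_nat fun q' hq' =>
          card_comp_snoc_eq_of_notMem_range (by simpa using hq') hq s v,
        card_compl, card_image_of_injective _ hp, card_univ, Fintype.card_fin]
    rw [Nat.descFactorial_succ, patternWeight_snoc, ← mul_assoc, mul_comm _ (_ - r), hcount,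
      mul_assoc, ih hp, mul_left_comm]

theorem card_comp_mem_mul_descFactorial (d : ℕ) {r : ℕ} {p : Fin r → α} (hp : p.Injective)
    (T : Finset (Fin r → β)) :
    #{y ∈ regularMaps α β d | y ∘ p ∈ T} * (Fintype.card α).descFactorial r
      = #(regularMaps α β d) * ∑ s ∈ T, patternWeight d s := by
  rw [← sum_card_fiberwise_eq_card_filter, sum_mul, mul_sum]
  exact sum_congr rfl fun s _ => card_comp_eq_mul_descFactorial d hp s

theorem card_comp_mem_and_comp_mem_mul_descFactorial_le (d : ℕ) {r r' : ℕ} {p : Fin r → α}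
    {p' : Fin r' → α} (hpp' : (Fin.append p p').Injective) (T : Finset (Fin r → β))
    (T' : Finset (Fin r' → β)) :
    #{y ∈ regularMaps α β d | y ∘ p ∈ T ∧ y ∘ p' ∈ T'}
        * (Fintype.card α).descFactorial (r + r')
      ≤ #(regularMaps α β d)
        * ((∑ s ∈ T, patternWeight d s) * ∑ t ∈ T', patternWeight d t) := by
  have hevent : {y ∈ regularMaps α β d | y ∘ p ∈ T ∧ y ∘ p' ∈ T'}
      = {y ∈ regularMaps α β d |
          y ∘ Fin.append p p' ∈ (T ×ˢ T').map (Fin.appendEquiv r r').toEmbedding} := by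
    refine filter_congr fun y _ => ?_
    rw [mem_map_equiv, comp_append]
    show _ ↔ (Fin.appendEquiv r r').symm (Fin.appendEquiv r r' (y ∘ p, y ∘ p')) ∈ T ×ˢ T'
    rw [Equiv.symm_apply_apply, mem_product]
  rw [hevent, card_comp_mem_mul_descFactorial d hpp', sum_map, sum_mul_sum, ← sum_product']
  gcongr with st
  exact patternWeight_append_le d st.1 st.2

end RegularMaps

section Loops

variable {n k : ℕ}

def loopPatterns (n k : ℕ) : Finset (Fin k → Fin n) := {s | isSimpleLoop (univ.val.map s)}

lemma exists_occ_eq_two_of_mem_loopPatterns {s : Fin k → Fin n} (hs : s ∈ loopPatterns n k) :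
    ∃ v₀, occ s v₀ = 2 ∧ ∀ v ≠ v₀, occ s v ≤ 1 := by
  simp only [loopPatterns, mem_filter, mem_univ, true_and, isSimpleLoop,
    count_map_univ_val] at hs
  obtain ⟨v₀, hv₀⟩ := card_eq_one.1 hs.1
  have key (v) : occ s v = 2 ↔ v = v₀ := by simpa using Finset.ext_iff.1 hv₀ v
  refine ⟨v₀, (key v₀).2 rfl, fun v hv => ?_⟩
  have := hs.2 v
  have := mt (key v).1 hv
  omega

lemma patternWeight_of_mem_loopPatterns (d : ℕ) {s : Fin k → Fin n}
    (hs : s ∈ loopPatterns n k) :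
    patternWeight d s = d.descFactorial 2 * d ^ (k - 2) := by
  obtain ⟨v₀, h2, h1⟩ := exists_occ_eq_two_of_mem_loopPatterns hs
  have hsum : occ s v₀ + ∑ v ∈ univ.erase v₀, occ s v = k := by
    rw [add_sum_erase _ _ (mem_univ _), sum_occ, Fintype.card_fin]
  have hpow (v) (hv : v ∈ univ.erase v₀) : d.descFactorial (occ s v) = d ^ occ s v := by
    have := h1 v (ne_of_mem_erase hv)
    interval_cases occ s v <;> simp
  rw [patternWeight, ← mul_prod_erase _ _ (mem_univ v₀), h2, prod_congr rfl hpow,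
    prod_pow_eq_pow_sum]
  congr 2
  omega

def repeatedPositions (s : Fin k → Fin n) : Finset (Fin k) := {t | occ s (s t) = 2}

lemma mem_repeatedPositions_iff {s : Fin k → Fin n} {v₀ : Fin n} (h2 : occ s v₀ = 2)
    (h1 : ∀ v ≠ v₀, occ s v ≤ 1) {t : Fin k} :
    t ∈ repeatedPositions s ↔ s t = v₀ := by
  refine ⟨fun ht => ?_, fun ht => by simp [repeatedPositions, ht, h2]⟩
  by_contra hne
  have := h1 _ hne
  simp only [repeatedPositions, mem_filter, mem_univ, true_and] at ht
  omega

lemma apply_eq_of_mem_repeatedPositions {s : Fin k → Fin n} (hs : s ∈ loopPatterns n k)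
    {t t' : Fin k} (ht : t ∈ repeatedPositions s) (ht' : t' ∈ repeatedPositions s) :
    s t = s t' := by
  obtain ⟨v₀, h2, h1⟩ := exists_occ_eq_two_of_mem_loopPatterns hs
  rw [(mem_repeatedPositions_iff h2 h1).1 ht, (mem_repeatedPositions_iff h2 h1).1 ht']

lemma mem_repeatedPositions_of_apply_eq {s : Fin k → Fin n} (hs : s ∈ loopPatterns n k)
    {t t' : Fin k} (h : t ≠ t') (hst : s t = s t') : t ∈ repeatedPositions s := by
  obtain ⟨v₀, h2, h1⟩ := exists_occ_eq_two_of_mem_loopPatterns hs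
  rw [mem_repeatedPositions_iff h2 h1]
  by_contra hne
  have := h1 _ hne
  have := two_le_occ h hst
  omega

/-- A loop pattern is injective away from one of its two repeated positions and is determined
by its values there. -/
lemma card_filter_repeatedPositions_le {P : Finset (Fin k)} (hP : #P = 2) :
    #{s ∈ loopPatterns n k | repeatedPositions s = P} ≤ n.descFactorial (k - 1) := by
  obtain ⟨a, b, hab, rfl⟩ := card_eq_two.1 hP
  calc _ ≤ #{g : {t // t ≠ b} → Fin n | g.Injective} := by
        refine card_le_card_of_injOn (fun s t => s t) (fun s hs => ?_) fun s hs s' hs' hss' => ?_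
        · simp only [coe_filter, Set.mem_ofPred_eq, mem_univ, true_and] at hs ⊢
          intro t t' htt'
          by_contra hne
          have hne' : (t : Fin k) ≠ t' := fun h => hne (Subtype.ext h)
          have ht := mem_repeatedPositions_of_apply_eq hs.1 hne' htt'
          have ht' := mem_repeatedPositions_of_apply_eq hs.1 hne'.symm htt'.symm
          simp only [hs.2, mem_insert, mem_singleton, t.2, t'.2, or_false] at ht ht'
          exact hne' (ht.trans ht'.symm)
        · simp only [coe_filter, Set.mem_ofPred_eq] at hs hs'
          funext t
          by_cases ht : t = b
          · rw [ht, apply_eq_of_mem_repeatedPositions hs.1 (t' := a) (by simp [hs.2])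
                (by simp [hs.2]), apply_eq_of_mem_repeatedPositions hs'.1 (t' := a)
                (by simp [hs'.2]) (by simp [hs'.2])]
            exact congrFun hss' ⟨a, hab⟩
          · exact congrFun hss' ⟨t, ht⟩
    _ = n.descFactorial (k - 1) := by
        rw [← Fintype.card_subtype, Fintype.card_congr (Equiv.subtypeInjectiveEquivEmbedding _ _),
          Fintype.card_embedding_eq, Fintype.card_fin, Fintype.card_subtype_compl,
          Fintype.card_subtype_eq, Fintype.card_fin]

lemma card_loopPatterns_le : #(loopPatterns n k) ≤ k.choose 2 * n.descFactorial (k - 1) := by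
  have hcover : loopPatterns n k ⊆ (univ.powersetCard 2).biUnion
      fun P => {s ∈ loopPatterns n k | repeatedPositions s = P} := by
    intro s hs
    obtain ⟨v₀, h2, h1⟩ := exists_occ_eq_two_of_mem_loopPatterns hs
    have : repeatedPositions s = ({t | s t = v₀} : Finset (Fin k)) := by
      ext t; simp [mem_repeatedPositions_iff h2 h1]
    simp only [mem_biUnion, mem_powersetCard_univ, mem_filter]
    exact ⟨_, by rw [this]; exact h2, hs, rfl⟩
  calc #(loopPatterns n k)
      ≤ ∑ P ∈ univ.powersetCard 2, #{s ∈ loopPatterns n k | repeatedPositions s = P} :=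
        (card_le_card hcover).trans card_biUnion_le
    _ ≤ ∑ _P ∈ univ.powersetCard 2, n.descFactorial (k - 1) :=
        sum_le_sum fun P hP => card_filter_repeatedPositions_le (mem_powersetCard_univ.1 hP)
    _ = k.choose 2 * n.descFactorial (k - 1) := by simp

lemma sum_patternWeight_loopPatterns_le (d : ℕ) :
    ∑ s ∈ loopPatterns n k, patternWeight d s
      ≤ k.choose 2 * n.descFactorial (k - 1) * (d.descFactorial 2 * d ^ (k - 2)) := by
  rw [sum_congr rfl fun s hs => patternWeight_of_mem_loopPatterns d hs, sum_const, smul_eq_mul]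
  exact Nat.mul_le_mul_right _ card_loopPatterns_le

end Loops

section Blocks

variable {N k i j : ℕ}

def block (k i : ℕ) (h : k * i + k ≤ N) : Fin k → Fin N := Fin.castLE h ∘ Fin.natAdd (k * i)

lemma mul_add_le_of_lt {m : ℕ} (hN : N = k * m) (hi : i < m) : k * i + k ≤ N := by
  rw [hN, ← Nat.mul_succ]
  exact Nat.mul_le_mul_left k hi

lemma block_injective (h : k * i + k ≤ N) : (block k i h).Injective :=
  (Fin.castLE_injective h).comp (Fin.natAdd_injective _ _)

lemma append_block_injective (hi : k * i + k ≤ N) (hj : k * j + k ≤ N) (hij : i ≠ j) :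
    (Fin.append (block k i hi) (block k j hj)).Injective := by
  refine Fin.append_injective_iff.2 ⟨block_injective hi, block_injective hj, fun a b hab => ?_⟩
  have hval : k * i + a = k * j + b := by simpa [block] using congrArg Fin.val hab
  have hsep {i j a : ℕ} (b : ℕ) (hij : i < j) (ha : a < k) : k * i + a < k * j + b := by
    have := Nat.mul_le_mul_left k (Nat.succ_le_of_lt hij)
    rw [Nat.mul_succ] at this
    omega
  rcases Nat.lt_or_gt_of_ne hij with hlt | hlt
  · exact (hsep b hlt a.isLt).ne hval
  · exact (hsep a hlt b.isLt).ne' hval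

end Blocks

section Edges

variable {n d k i j : ℕ}

lemma edgeOf_eq_map_block (h : k * i + k ≤ n * d) (y : Fin (n * d) → Fin n) :
    edgeOf k y i = univ.val.map (y ∘ block k i h) := by
  have hrange : range k = (univ : Finset (Fin k)).map Fin.valEmbedding := by
    rw [Fin.map_valEmbedding_univ, Nat.Iio_eq_range]
  rw [edgeOf, hrange, map_val, Multiset.filterMap_map, ← Multiset.filterMap_eq_map]
  congr 1
  funext t
  have ht : k * i + t < n * d := by omega
  simp only [Function.comp_apply, Fin.valEmbedding_apply, dif_pos ht, block]
  rfl

lemma isSimpleLoop_edgeOf_iff (h : k * i + k ≤ n * d) (y : Fin (n * d) → Fin n) :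
    isSimpleLoop (edgeOf k y i) ↔ y ∘ block k i h ∈ loopPatterns n k := by
  rw [edgeOf_eq_map_block h, loopPatterns, mem_filter]
  exact (and_iff_right (mem_univ _)).symm

lemma card_isSimpleLoop_edgeOf_mul (h : k * i + k ≤ n * d) :
    #{y ∈ permSet n d | isSimpleLoop (edgeOf k y i)} * (n * d).descFactorial k
      = #(permSet n d) * ∑ s ∈ loopPatterns n k, patternWeight d s := by
  have := card_comp_mem_mul_descFactorial d (block_injective h) (loopPatterns n k)
  rw [Fintype.card_fin] at this
  simpa only [permSet_eq_regularMaps, isSimpleLoop_edgeOf_iff h] using this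

lemma card_isSimpleLoop_edgeOf_and_mul_le (hi : k * i + k ≤ n * d) (hj : k * j + k ≤ n * d)
    (hij : i ≠ j) :
    #{y ∈ permSet n d | isSimpleLoop (edgeOf k y i) ∧ isSimpleLoop (edgeOf k y j)}
        * (n * d).descFactorial (2 * k)
      ≤ #(permSet n d) * (∑ s ∈ loopPatterns n k, patternWeight d s) ^ 2 := by
  have := card_comp_mem_and_comp_mem_mul_descFactorial_le d (append_block_injective hi hj hij)
    (loopPatterns n k) (loopPatterns n k)
  rw [Fintype.card_fin, ← two_mul, ← sq] at this
  simpa only [permSet_eq_regularMaps, isSimpleLoop_edgeOf_iff hi, isSimpleLoop_edgeOf_iff hj]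
    using this

end Edges

lemma covariance_le_of_card_bounds {N A B C L M D E F : ℕ} (hN : 0 < N) (hE : 0 < E)
    (hED : E ≤ D) (hF : F = D * E) (hA : A * F ≤ N * L ^ 2) (hB : B * D = N * L)
    (hC : C * D = N * L) (hLM : L ≤ M) :
    (A / N - B / N * (C / N) : ℝ) ≤ M ^ 2 * ((D - E : ℕ) : ℝ) / (F * D) := by
  subst hF
  have hD : (0 : ℝ) < D := by exact_mod_cast hE.trans_le hED
  have hE' : (0 : ℝ) < E := by exact_mod_cast hE
  have hN' : (0 : ℝ) < N := by exact_mod_cast hN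
  have hB' : (B / N : ℝ) = L / D := by
    rw [div_eq_div_iff hN'.ne' hD.ne']
    exact_mod_cast hB.trans (mul_comm _ _)
  have hC' : (C / N : ℝ) = L / D := by
    rw [div_eq_div_iff hN'.ne' hD.ne']
    exact_mod_cast hC.trans (mul_comm _ _)
  have hA' : (A / N : ℝ) ≤ L ^ 2 / (D * E) := by
    rw [div_le_div_iff₀ hN' (mul_pos hD hE')]
    exact_mod_cast hA.trans_eq (mul_comm _ _)
  have hDE : (0 : ℝ) ≤ D - E := sub_nonneg.2 (by exact_mod_cast hED)
  rw [hB', hC', Nat.cast_sub hED, Nat.cast_mul]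
  calc _ ≤ (L ^ 2 / (D * E) - L / D * (L / D) : ℝ) := by linarith
    _ = L ^ 2 * (D - E) / (D * E * D) := by field_simp
    _ ≤ _ := by gcongr

theorem stmt7_general (n d k m : ℕ) (hm : n * d = k * m)
    (h2k : 2 * k ≤ n * d) (i j : ℕ) (hi : i < m) (hj : j < m) (hij : i ≠ j) :
    (((permSet n d).filter
          (fun y => isSimpleLoop (edgeOf k y i) ∧ isSimpleLoop (edgeOf k y j))).card : ℝ)
        / ((permSet n d).card : ℝ)
      - ((((permSet n d).filter (fun y => isSimpleLoop (edgeOf k y i))).card : ℝ)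
            / ((permSet n d).card : ℝ))
        * ((((permSet n d).filter (fun y => isSimpleLoop (edgeOf k y j))).card : ℝ)
            / ((permSet n d).card : ℝ))
      ≤ (k.choose 2 : ℝ) ^ 2 * (n.descFactorial (k - 1) : ℝ) ^ 2
          * (d.descFactorial 2 : ℝ) ^ 2 * (d : ℝ) ^ (2 * k - 4)
          * (((n * d).descFactorial k - (n * d - k).descFactorial k : ℕ) : ℝ)
          / (((n * d).descFactorial (2 * k) : ℝ) * ((n * d).descFactorial k : ℝ)) := by
  have hbi := mul_add_le_of_lt hm hi
  have hbj := mul_add_le_of_lt hm hj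
  have hsplit : (n * d).descFactorial (2 * k)
      = (n * d).descFactorial k * (n * d - k).descFactorial k := by
    rw [← Nat.descFactorial_mul_descFactorial (by omega : k ≤ 2 * k), mul_comm,
      show 2 * k - k = k by omega]
  have hN : 0 < #(permSet n d) :=
    card_pos.2 (permSet_eq_regularMaps n d ▸ regularMaps_nonempty (by simp))
  refine (covariance_le_of_card_bounds hN (Nat.descFactorial_pos.2 (by omega))
    (Nat.descFactorial_le _ (Nat.sub_le _ _)) hsplit
    (card_isSimpleLoop_edgeOf_and_mul_le hbi hbj hij) (card_isSimpleLoop_edgeOf_mul hbi)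
    (card_isSimpleLoop_edgeOf_mul hbj) (sum_patternWeight_loopPatterns_le d)).trans_eq ?_
  rw [show 2 * k - 4 = (k - 2) * 2 by omega, pow_mul]
  push_cast
  ring

/-- For `i ≠ j`, the covariance of the indicators that the `i`-th and `j`-th edges of a
uniformly random permutation `Y` are simple loops satisfies
`Cov(I_i,I_j) ≤ C(k,2)^2 (n)_{k-1}^2 (d)_2^2 d^{2k-4} ((nd)_k - (nd-k)_k) / ((nd)_{2k} (nd)_k)`. -/
theorem stmt7 (n d k m : ℕ) (hk : 3 ≤ k) (hn : k ≤ n) (hd : 2 ≤ d) (hm : n * d = k * m)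
    (h2k : 2 * k ≤ n * d) (i j : ℕ) (hi : i < m) (hj : j < m) (hij : i ≠ j) :
    (((permSet n d).filter
          (fun y => isSimpleLoop (edgeOf k y i) ∧ isSimpleLoop (edgeOf k y j))).card : ℝ)
        / ((permSet n d).card : ℝ)
      - ((((permSet n d).filter (fun y => isSimpleLoop (edgeOf k y i))).card : ℝ)
            / ((permSet n d).card : ℝ))
        * ((((permSet n d).filter (fun y => isSimpleLoop (edgeOf k y j))).card : ℝ)
            / ((permSet n d).card : ℝ))
      ≤ (k.choose 2 : ℝ) ^ 2 * (n.descFactorial (k - 1) : ℝ) ^ 2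
          * (d.descFactorial 2 : ℝ) ^ 2 * (d : ℝ) ^ (2 * k - 4)
          * (((n * d).descFactorial k - (n * d - k).descFactorial k : ℕ) : ℝ)
          / (((n * d).descFactorial (2 * k) : ℝ) * ((n * d).descFactorial k : ℝ)) :=
  stmt7_general n d k m hm h2k i j hi hj hij
end

section
/- Let y ∈ E_l be a permutation whose associated k-multigraph has exactly l ≥ 1 simple loops, no multiple edges, m = nd/k edges total, and max degree d. Then the number of forward switchings applicable to y is at most l·k^2·m^2 = n^2 d^2 l, and at least k^2 · l · (m - l - 2k^2 d^2)^2. -/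
/-- An edge (multiset of vertices) is a *loop* if some vertex has multiplicity ≥ 2. -/
def isLoopE {n : ℕ} (e : Multiset (Fin n)) : Prop := ∃ v, 2 ≤ e.count v

instance {n : ℕ} : DecidablePred (isLoopE (n := n)) := fun _ => by
  unfold isLoopE; infer_instance

/-- An edge is a *simple loop* if exactly one vertex has multiplicity 2 and no vertex has
multiplicity greater than 2. -/
def isSimpleLoopE {n : ℕ} (e : Multiset (Fin n)) : Prop :=
  (Finset.univ.filter (fun v => e.count v = 2)).card = 1 ∧ ∀ v, e.count v ≤ 2

instance {n : ℕ} : DecidablePred (isSimpleLoopE (n := n)) := fun _ => by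
  unfold isSimpleLoopE; infer_instance

/-- The multigraph obtained from `G` by a forward switching: the loop `f` and proper edges
`e1, e2` are replaced by `e1' = e1 ∪ {v} - {y⋆}`, `e2' = e2 ∪ {v} - {z⋆}` and
`e3' = f ∪ {y⋆,z⋆} - {v,v}`. -/
def fwdResult {n : ℕ} (G : Multiset (Multiset (Fin n))) (f e1 e2 : Multiset (Fin n))
    (v ys zs : Fin n) : Multiset (Multiset (Fin n)) :=
  (v ::ₘ e1.erase ys) ::ₘ (v ::ₘ e2.erase zs) ::ₘ (ys ::ₘ zs ::ₘ (f.erase v).erase v) ::ₘ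
    (((G.erase f).erase e1).erase e2)

/-- A valid forward switching choice on `G` (which has `l` simple loops): `f` is a simple
loop with repeated vertex `v`; `e1 ≠ e2` are proper edges disjoint from `f` sharing at most
`k-2` vertices; `y⋆ ∈ e1 \ e2`, `z⋆ ∈ e2 \ e1`; and the resulting multigraph has no
multiple edges and exactly `l-1` loops, all of them simple. -/
def fwdOk (n k l : ℕ) (G : Multiset (Multiset (Fin n))) (f e1 e2 : Multiset (Fin n))
    (v ys zs : Fin n) : Prop :=
  isSimpleLoopE f ∧ f.count v = 2 ∧
  ¬ isLoopE e1 ∧ ¬ isLoopE e2 ∧ e1 ≠ e2 ∧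
  f ∩ e1 = 0 ∧ f ∩ e2 = 0 ∧
  Multiset.card (e1 ∩ e2) ≤ k - 2 ∧
  ys ∈ e1 ∧ ys ∉ e2 ∧ zs ∈ e2 ∧ zs ∉ e1 ∧
  (∀ e ∈ fwdResult G f e1 e2 v ys zs, (fwdResult G f e1 e2 v ys zs).count e = 1) ∧
  Multiset.card ((fwdResult G f e1 e2 v ys zs).filter isLoopE) = l - 1 ∧
  (∀ e ∈ fwdResult G f e1 e2 v ys zs, isLoopE e → isSimpleLoopE e)

instance (n k l : ℕ) (G : Multiset (Multiset (Fin n))) (f e1 e2 : Multiset (Fin n))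
    (v ys zs : Fin n) : Decidable (fwdOk n k l G f e1 e2 v ys zs) := by
  unfold fwdOk; infer_instance

/-- The set of all forward switching choices `(f, e1, e2, v, y⋆, z⋆)` applicable to `G`. -/
def fwdSwitchSet (n k l : ℕ) (G : Multiset (Multiset (Fin n))) :
    Finset ((Multiset (Fin n) × Multiset (Fin n) × Multiset (Fin n)) ×
      (Fin n × Fin n × Fin n)) :=
  ((G.toFinset ×ˢ G.toFinset ×ˢ G.toFinset) ×ˢ
      (Finset.univ : Finset (Fin n × Fin n × Fin n))).filter
    (fun t => fwdOk n k l G t.1.1 t.1.2.1 t.1.2.2 t.2.1 t.2.2.1 t.2.2.2)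


/-!
Upper bound: a switching is determined by the loop `f`, the ordered pair `(e₁, e₂)` and the
two vertices `y⋆ ∈ e₁`, `z⋆ ∈ e₂`, because `v` is the unique doubled vertex of `f`; this leaves
at most `l · m² · k²` choices.

Lower bound: call an edge *far* from `f` if no edge of `G` meets both. At most `l` edges are
loops and, as every vertex lies in at most `d` edges, at most `(kd)²` edges are not far from
`f`, and at most `kd` edges meet a given `e₁`. Hence there are at least `t = m - l - 2k²d²`
choices for each of `e₁` and `e₂` (proper, far from `f`, `e₁ ∩ e₂ = ∅`), and every such choice
together with any `y⋆ ∈ e₁`, `z⋆ ∈ e₂` is a valid switching: farness keeps the three new edges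
`e₁'`, `e₂'`, `e₃'`, which meet both `f` and `e₁` (or `e₂`), out of the rest of `G`.
-/

open Finset

namespace Finset

variable {ι : Type*} {σ : ι → Type*} {s : Finset ι} {t : ∀ i, Finset (σ i)} {a b : ℕ}

theorem card_sigma_le_mul (hs : #s ≤ a) (ht : ∀ i ∈ s, #(t i) ≤ b) : #(s.sigma t) ≤ a * b := by
  rw [card_sigma]
  exact (sum_le_card_nsmul s _ b ht).trans (Nat.mul_le_mul_right b hs)

theorem mul_le_card_sigma (hs : a ≤ #s) (ht : ∀ i ∈ s, b ≤ #(t i)) : a * b ≤ #(s.sigma t) := by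
  rw [card_sigma]
  exact (Nat.mul_le_mul_right b hs).trans (card_nsmul_le_sum s _ b ht)

end Finset

namespace Multiset

variable {α : Type*} [DecidableEq α]

theorem filter_erase (p : α → Prop) [DecidablePred p] (s : Multiset α) (a : α) :
    (s.erase a).filter p = (s.filter p).erase a := by
  rw [← sub_singleton, ← sub_singleton, filter_sub]
  by_cases ha : p a
  · rw [filter_singleton, if_pos ha]
  · rw [filter_singleton, if_neg ha, empty_eq_zero, Multiset.sub_zero, sub_singleton,
      erase_of_notMem fun h => ha (of_mem_filter h)]

theorem exists_mem_erase_of_one_lt_card {s : Multiset α} (a : α) (hs : 1 < card s) :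
    ∃ u, u ∈ s.erase a := by
  rw [← card_pos_iff_exists_mem]
  by_cases ha : a ∈ s
  · rw [card_erase_of_mem ha, Nat.pred_eq_sub_one]; omega
  · rw [erase_of_notMem ha]; omega

theorem notMem_of_inter_eq_zero {s t : Multiset α} (h : s ∩ t = 0) {a : α} (ha : a ∈ s) :
    a ∉ t :=
  disjoint_left.mp (inter_eq_zero_iff_disjoint.mp h) ha

theorem inter_ne_zero_of_mem {s t : Multiset α} {a : α} (hs : a ∈ s) (ht : a ∈ t) : s ∩ t ≠ 0 :=
  fun h => notMem_of_inter_eq_zero h hs ht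

end Multiset

section Edges

open Multiset

variable {n : ℕ} {e f : Multiset (Fin n)} {u v : Fin n}

theorem not_isLoopE_iff_nodup : ¬ isLoopE e ↔ e.Nodup := by
  simp only [isLoopE, not_exists, not_le, nodup_iff_count_le_one, Nat.lt_succ_iff]

theorem not_isLoopE_cons_erase (he : ¬ isLoopE e) (hv : v ∉ e) (u : Fin n) :
    ¬ isLoopE (v ::ₘ e.erase u) :=
  not_isLoopE_iff_nodup.mpr <| nodup_cons.mpr
    ⟨fun h => hv (mem_of_mem_erase h), (not_isLoopE_iff_nodup.mp he).erase u⟩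

theorem isSimpleLoopE.exists_count_eq_two (hf : isSimpleLoopE f) : ∃ v, f.count v = 2 := by
  obtain ⟨a, ha⟩ := Finset.card_pos.mp (hf.1 ▸ Nat.one_pos)
  exact ⟨a, (Finset.mem_filter.mp ha).2⟩

theorem isSimpleLoopE.eq_of_count_eq_two (hf : isSimpleLoopE f) (hu : f.count u = 2)
    (hv : f.count v = 2) : u = v :=
  Finset.card_le_one.mp hf.1.le u (by simp [hu]) v (by simp [hv])

theorem isSimpleLoopE.nodup_erase_erase (hf : isSimpleLoopE f) (hv : f.count v = 2) :
    ((f.erase v).erase v).Nodup := by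
  rw [nodup_iff_count_le_one]
  intro u
  rcases eq_or_ne u v with rfl | huv
  · simp only [count_erase_self, hv]; omega
  · rw [count_erase_of_ne huv, count_erase_of_ne huv]
    have hu2 : f.count u ≠ 2 := fun hu => huv (hf.eq_of_count_eq_two hu hv)
    have := hf.2 u
    omega

theorem notMem_erase_erase_of_count_eq_two (hv : f.count v = 2) : v ∉ (f.erase v).erase v := by
  rw [← count_eq_zero, count_erase_self, count_erase_self, hv]

end Edges

section Degrees

variable {n d : ℕ} {G : Multiset (Multiset (Fin n))}

theorem card_toFinset_filter_le (p : Multiset (Fin n) → Prop) [DecidablePred p] :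
    #(G.toFinset.filter p) ≤ Multiset.card (G.filter p) := by
  rw [← Multiset.toFinset_filter]
  exact Multiset.toFinset_card_le _

theorem card_toFinset_filter_of_nodup (hG : G.Nodup) (p : Multiset (Fin n) → Prop)
    [DecidablePred p] : #(G.toFinset.filter p) = Multiset.card (G.filter p) := by
  rw [← Multiset.toFinset_filter, Multiset.toFinset_card_of_nodup (hG.filter p)]

theorem card_filter_mem_le_sum_count (u : Fin n) :
    Multiset.card (G.filter (u ∈ ·)) ≤ (G.map (·.count u)).sum := by
  induction G using Multiset.induction_on with
  | empty => simp
  | cons a s ih =>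
    by_cases h : u ∈ a
    · have := Multiset.one_le_count_iff_mem.mpr h
      simp only [Multiset.filter_cons, if_pos h, Multiset.card_add, Multiset.card_singleton,
        Multiset.map_cons, Multiset.sum_cons]
      omega
    · simp only [Multiset.filter_cons, if_neg h, Multiset.card_add, Multiset.card_zero,
        Multiset.map_cons, Multiset.sum_cons]
      omega

theorem card_filter_inter_ne_zero_le (hdeg : ∀ v : Fin n, (G.map (·.count v)).sum ≤ d)
    (h : Multiset (Fin n)) :
    #(G.toFinset.filter (h ∩ · ≠ 0)) ≤ Multiset.card h * d := by
  have hsub : G.toFinset.filter (h ∩ · ≠ 0) ⊆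
      h.toFinset.biUnion (fun u => G.toFinset.filter (u ∈ ·)) := by
    intro e he
    obtain ⟨heG, hhe⟩ := Finset.mem_filter.mp he
    obtain ⟨u, hu⟩ := Multiset.exists_mem_of_ne_zero hhe
    rw [Multiset.mem_inter] at hu
    exact Finset.mem_biUnion.mpr ⟨u, Multiset.mem_toFinset.mpr hu.1,
      Finset.mem_filter.mpr ⟨heG, hu.2⟩⟩
  calc #(G.toFinset.filter (h ∩ · ≠ 0))
      ≤ #h.toFinset * d := (card_le_card hsub).trans <| card_biUnion_le_card_mul _ _ d
          fun u _ => (card_toFinset_filter_le _).trans <|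
            (card_filter_mem_le_sum_count u).trans (hdeg u)
    _ ≤ Multiset.card h * d := Nat.mul_le_mul_right d (Multiset.toFinset_card_le h)

end Degrees

section FarEdges

variable {n d k : ℕ} {G : Multiset (Multiset (Fin n))} {f e g : Multiset (Fin n)} {u v : Fin n}

/-- `e` is at distance at least 3 from `f` in the intersection graph of the edges of `G`. -/
def FarFrom (G : Multiset (Multiset (Fin n))) (f e : Multiset (Fin n)) : Prop :=
  ∀ g ∈ G, g ∩ f ≠ 0 → g ∩ e = 0

instance : Decidable (FarFrom G f e) := by
  unfold FarFrom; infer_instance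

theorem FarFrom.inter_eq_zero (h : FarFrom G f e) (hfG : f ∈ G) (hvf : v ∈ f) : f ∩ e = 0 :=
  h f hfG (Multiset.inter_ne_zero_of_mem hvf hvf)

theorem FarFrom.notMem (h : FarFrom G f e) (hvg : v ∈ g) (hvf : v ∈ f) (hug : u ∈ g)
    (hue : u ∈ e) : g ∉ G := fun hg =>
  Multiset.notMem_of_inter_eq_zero (h g hg (Multiset.inter_ne_zero_of_mem hvg hvf)) hug hue

theorem card_filter_not_farFrom_le (hdeg : ∀ v : Fin n, (G.map (·.count v)).sum ≤ d)
    (hedge : ∀ e ∈ G, Multiset.card e = k) (hf : Multiset.card f = k) :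
    #(G.toFinset.filter (¬ FarFrom G f ·)) ≤ (k * d) * (k * d) := by
  have hsub : G.toFinset.filter (¬ FarFrom G f ·) ⊆
      (G.toFinset.filter (f ∩ · ≠ 0)).biUnion (fun g => G.toFinset.filter (g ∩ · ≠ 0)) := by
    intro e he
    obtain ⟨heG, hfar⟩ := Finset.mem_filter.mp he
    simp only [FarFrom, not_forall] at hfar
    obtain ⟨g, hgG, hgf, hge⟩ := hfar
    rw [Multiset.inter_comm] at hgf
    exact Finset.mem_biUnion.mpr ⟨g, Finset.mem_filter.mpr ⟨Multiset.mem_toFinset.mpr hgG, hgf⟩,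
      Finset.mem_filter.mpr ⟨heG, hge⟩⟩
  have hmeet : ∀ g : Multiset (Fin n), Multiset.card g = k →
      #(G.toFinset.filter (g ∩ · ≠ 0)) ≤ k * d :=
    fun g hg => hg ▸ card_filter_inter_ne_zero_le hdeg g
  calc #(G.toFinset.filter (¬ FarFrom G f ·))
      ≤ #(G.toFinset.filter (f ∩ · ≠ 0)) * (k * d) :=
        (card_le_card hsub).trans <| card_biUnion_le_card_mul _ _ _ fun g hg =>
          hmeet g (hedge g (Multiset.mem_toFinset.mp (Finset.mem_filter.mp hg).1))
    _ ≤ (k * d) * (k * d) := Nat.mul_le_mul_right _ (hmeet f hf)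

def farProperEdges (G : Multiset (Multiset (Fin n))) (f : Multiset (Fin n)) :
    Finset (Multiset (Fin n)) :=
  G.toFinset.filter fun e => ¬ isLoopE e ∧ FarFrom G f e

theorem card_sub_sub_le_card_farProperEdges (hG : G.Nodup)
    (hdeg : ∀ v : Fin n, (G.map (·.count v)).sum ≤ d) (hedge : ∀ e ∈ G, Multiset.card e = k)
    (hf : Multiset.card f = k) :
    Multiset.card G - Multiset.card (G.filter isLoopE) - (k * d) * (k * d) ≤
      #(farProperEdges G f) := by
  have hsub : G.toFinset ⊆ farProperEdges G f ∪
      (G.toFinset.filter isLoopE ∪ G.toFinset.filter (¬ FarFrom G f ·)) := by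
    intro e he
    by_cases hL : isLoopE e <;> by_cases hF : FarFrom G f e <;>
      simp [farProperEdges, he, hL, hF]
  have hcover := (card_le_card hsub).trans <| (card_union_le _ _).trans <|
    Nat.add_le_add_left (card_union_le _ _) _
  rw [Multiset.toFinset_card_of_nodup hG] at hcover
  have hloops := card_toFinset_filter_le (G := G) isLoopE
  have hnear := card_filter_not_farFrom_le hdeg hedge hf
  omega

theorem card_sub_le_card_filter_inter_eq_zero (hdeg : ∀ v : Fin n, (G.map (·.count v)).sum ≤ d)
    {s : Finset (Multiset (Fin n))} (hs : s ⊆ G.toFinset) (h : Multiset (Fin n)) :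
    #s - Multiset.card h * d ≤ #(s.filter (h ∩ · = 0)) := by
  have hsplit := card_filter_add_card_filter_not (s := s) (h ∩ · = 0)
  have hmeet := (card_le_card (filter_subset_filter (¬ h ∩ · = 0) hs)).trans
    (card_filter_inter_ne_zero_le hdeg h)
  omega

end FarEdges

section ForwardSwitching

open Multiset

variable {n k l : ℕ} {G : Multiset (Multiset (Fin n))} {f e1 e2 : Multiset (Fin n)}
  {v ys zs : Fin n}

theorem mem_fwdSwitchSet :
    ((f, e1, e2), (v, ys, zs)) ∈ fwdSwitchSet n k l G ↔
      (f ∈ G ∧ e1 ∈ G ∧ e2 ∈ G) ∧ fwdOk n k l G f e1 e2 v ys zs := by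
  simp [fwdSwitchSet]

theorem filter_isLoopE_fwdResult (he1 : ¬ isLoopE e1) (he2 : ¬ isLoopE e2)
    (h1 : ¬ isLoopE (v ::ₘ e1.erase ys)) (h2 : ¬ isLoopE (v ::ₘ e2.erase zs))
    (h3 : ¬ isLoopE (ys ::ₘ zs ::ₘ (f.erase v).erase v)) :
    (fwdResult G f e1 e2 v ys zs).filter isLoopE = (G.filter isLoopE).erase f := by
  rw [fwdResult, filter_cons_of_neg _ h1, filter_cons_of_neg _ h2, filter_cons_of_neg _ h3,
    Multiset.filter_erase, Multiset.filter_erase, Multiset.filter_erase,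
    erase_of_notMem fun h => he2 (of_mem_filter (mem_of_mem_erase (mem_of_mem_erase h))),
    erase_of_notMem fun h => he1 (of_mem_filter (mem_of_mem_erase h))]

theorem nodup_fwdResult (hG : G.Nodup) (hfG : f ∈ G) (hv : f.count v = 2)
    (hf3 : 3 ≤ card f) (he1 : 2 ≤ card e1) (he2 : 2 ≤ card e2)
    (hfar1 : FarFrom G f e1) (hfar2 : FarFrom G f e2) (h12 : e1 ∩ e2 = 0)
    (hys : ys ∈ e1) (hzs : zs ∈ e2) : (fwdResult G f e1 e2 v ys zs).Nodup := by
  have hvf : v ∈ f := count_pos.mp (by omega)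
  have hv2 : v ∉ e2 := notMem_of_inter_eq_zero (hfar2.inter_eq_zero hfG hvf) hvf
  have hysf : ys ∉ f := fun h => notMem_of_inter_eq_zero (hfar1.inter_eq_zero hfG hvf) h hys
  have hzsf : zs ∉ f := fun h => notMem_of_inter_eq_zero (hfar2.inter_eq_zero hfG hvf) h hzs
  obtain ⟨u1, hu1⟩ := exists_mem_erase_of_one_lt_card ys (by omega : 1 < card e1)
  obtain ⟨u2, hu2⟩ := exists_mem_erase_of_one_lt_card zs (by omega : 1 < card e2)
  obtain ⟨w, hw⟩ := exists_mem_erase_of_one_lt_card v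
    (by rw [card_erase_of_mem hvf, Nat.pred_eq_sub_one]; omega : 1 < card (f.erase v))
  have hwf : w ∈ f := mem_of_mem_erase (mem_of_mem_erase hw)
  have hvC : v ∉ ys ::ₘ zs ::ₘ (f.erase v).erase v := by
    simp only [Multiset.mem_cons, not_or]
    exact ⟨fun h => hysf (h ▸ hvf), fun h => hzsf (h ▸ hvf),
      notMem_erase_erase_of_count_eq_two hv⟩
  have hAG : v ::ₘ e1.erase ys ∉ G :=
    hfar1.notMem (mem_cons_self _ _) hvf (mem_cons_of_mem hu1) (mem_of_mem_erase hu1)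
  have hBG : v ::ₘ e2.erase zs ∉ G :=
    hfar2.notMem (mem_cons_self _ _) hvf (mem_cons_of_mem hu2) (mem_of_mem_erase hu2)
  have hCG : ys ::ₘ zs ::ₘ (f.erase v).erase v ∉ G :=
    hfar1.notMem (mem_cons_of_mem (mem_cons_of_mem hw)) hwf (mem_cons_self _ _) hys
  have hAB : v ::ₘ e1.erase ys ≠ v ::ₘ e2.erase zs := by
    intro h
    have hu2A : u2 ∈ v ::ₘ e1.erase ys := h ▸ mem_cons_of_mem hu2
    rcases Multiset.mem_cons.mp hu2A with rfl | hu2e1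
    · exact hv2 (mem_of_mem_erase hu2)
    · exact notMem_of_inter_eq_zero h12 (mem_of_mem_erase hu2e1) (mem_of_mem_erase hu2)
  have hrest : ((G.erase f).erase e1).erase e2 ≤ G :=
    (erase_le _ _).trans ((erase_le _ _).trans (erase_le _ _))
  simp only [fwdResult, nodup_cons, Multiset.mem_cons, not_or]
  exact ⟨⟨hAB, fun h => hvC (h ▸ mem_cons_self _ _), fun h => hAG (mem_of_le hrest h)⟩,
    ⟨fun h => hvC (h ▸ mem_cons_self _ _), fun h => hBG (mem_of_le hrest h)⟩,
    fun h => hCG (mem_of_le hrest h), nodup_of_le hrest hG⟩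

theorem fwdOk_of_farFrom (hk : 3 ≤ k) (hG : G.Nodup) (hedge : ∀ e ∈ G, card e = k)
    (hloops : card (G.filter isLoopE) = l) (hsimple : ∀ e ∈ G, isLoopE e → isSimpleLoopE e)
    (hfG : f ∈ G) (hf : isSimpleLoopE f) (hv : f.count v = 2) (he1G : e1 ∈ G) (he2G : e2 ∈ G)
    (he1 : ¬ isLoopE e1) (he2 : ¬ isLoopE e2) (hfar1 : FarFrom G f e1) (hfar2 : FarFrom G f e2)
    (h12 : e1 ∩ e2 = 0) (hys : ys ∈ e1) (hzs : zs ∈ e2) : fwdOk n k l G f e1 e2 v ys zs := by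
  have hvf : v ∈ f := count_pos.mp (by omega)
  have hf1 := hfar1.inter_eq_zero hfG hvf
  have hf2 := hfar2.inter_eq_zero hfG hvf
  have hys2 : ys ∉ e2 := notMem_of_inter_eq_zero h12 hys
  have hzs1 : zs ∉ e1 := fun h => notMem_of_inter_eq_zero h12 h hzs
  have hA := not_isLoopE_cons_erase he1 (notMem_of_inter_eq_zero hf1 hvf) ys
  have hB := not_isLoopE_cons_erase he2 (notMem_of_inter_eq_zero hf2 hvf) zs
  have hC : ¬ isLoopE (ys ::ₘ zs ::ₘ (f.erase v).erase v) := by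
    rw [not_isLoopE_iff_nodup]
    simp only [nodup_cons, Multiset.mem_cons, not_or]
    exact ⟨⟨fun h => hys2 (h ▸ hzs), fun h => notMem_of_inter_eq_zero hf1
        (mem_of_mem_erase (mem_of_mem_erase h)) hys⟩,
      fun h => notMem_of_inter_eq_zero hf2 (mem_of_mem_erase (mem_of_mem_erase h)) hzs,
      hf.nodup_erase_erase hv⟩
  have hfilter := filter_isLoopE_fwdResult (G := G) he1 he2 hA hB hC
  have hfk := hedge f hfG
  have he1k := hedge e1 he1G
  have he2k := hedge e2 he2G
  refine ⟨hf, hv, he1, he2, fun h => hys2 (h ▸ hys), hf1, hf2, by simp [h12], hys, hys2, hzs,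
    hzs1, nodup_iff_count_eq_one.mp <| nodup_fwdResult hG hfG hv (by omega) (by omega)
      (by omega) hfar1 hfar2 h12 hys hzs, ?_, fun e he hloop => ?_⟩
  · rw [hfilter, card_erase_of_mem (mem_filter.mpr ⟨hfG, v, hv.ge⟩), hloops, Nat.pred_eq_sub_one]
  · have hmem := hfilter ▸ mem_filter.mpr ⟨he, hloop⟩
    exact hsimple e (mem_of_mem_filter (mem_of_mem_erase hmem)) hloop

end ForwardSwitching

section Bounds

variable {n d k l : ℕ} {G : Multiset (Multiset (Fin n))}

theorem card_fwdSwitchSet_le (hedge : ∀ e ∈ G, Multiset.card e = k) :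
    #(fwdSwitchSet n k l G) ≤
      Multiset.card (G.filter isLoopE) * k ^ 2 * Multiset.card G ^ 2 := by
  let U := ((G.toFinset.filter isLoopE) ×ˢ G.toFinset ×ˢ G.toFinset).sigma
    fun p : Multiset (Fin n) × Multiset (Fin n) × Multiset (Fin n) =>
      p.2.1.toFinset ×ˢ p.2.2.toFinset
  let forget : (Multiset (Fin n) × Multiset (Fin n) × Multiset (Fin n)) × (Fin n × Fin n × Fin n) →
      Σ _ : Multiset (Fin n) × Multiset (Fin n) × Multiset (Fin n), Fin n × Fin n :=
    fun x => ⟨x.1, x.2.2⟩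
  have hmaps : Set.MapsTo forget (fwdSwitchSet n k l G) U := by
    rintro ⟨⟨f, e1, e2⟩, v, ys, zs⟩ hx
    obtain ⟨⟨hfG, he1G, he2G⟩, -, hv, -, -, -, -, -, -, hys, -, hzs, -⟩ :=
      mem_fwdSwitchSet.mp hx
    simp only [U, coe_sigma, Set.mem_sigma_iff, coe_product, Set.mem_prod, mem_coe, mem_filter,
      Multiset.mem_toFinset]
    exact ⟨⟨⟨hfG, v, hv.ge⟩, he1G, he2G⟩, hys, hzs⟩
  have hinj : Set.InjOn forget (fwdSwitchSet n k l G) := by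
    rintro ⟨⟨f, e1, e2⟩, v, ys, zs⟩ hx ⟨⟨f', e1', e2'⟩, v', ys', zs'⟩ hx' h
    simp only [forget, Sigma.mk.injEq, heq_eq_eq, Prod.mk.injEq] at h
    obtain ⟨⟨rfl, rfl, rfl⟩, rfl, rfl⟩ := h
    obtain ⟨-, hf, hv, -⟩ := mem_fwdSwitchSet.mp hx
    obtain ⟨-, -, hv', -⟩ := mem_fwdSwitchSet.mp hx'
    rw [hf.eq_of_count_eq_two hv hv']
  have hcard : ∀ e ∈ G, #e.toFinset ≤ k := fun e he => hedge e he ▸ Multiset.toFinset_card_le e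
  calc #(fwdSwitchSet n k l G) ≤ #U := card_le_card_of_injOn _ hmaps hinj
    _ ≤ (Multiset.card (G.filter isLoopE) * (Multiset.card G * Multiset.card G)) * (k * k) := by
      refine card_sigma_le_mul ?_ fun p hp => ?_
      · simp only [card_product]
        exact Nat.mul_le_mul (card_toFinset_filter_le _)
          (Nat.mul_le_mul (Multiset.toFinset_card_le G) (Multiset.toFinset_card_le G))
      · simp only [mem_product, Multiset.mem_toFinset] at hp
        rw [card_product]
        exact Nat.mul_le_mul (hcard _ hp.2.1) (hcard _ hp.2.2)
    _ = _ := by ring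

theorem le_card_fwdSwitchSet (hk : 3 ≤ k) (hG : G.Nodup)
    (hedge : ∀ e ∈ G, Multiset.card e = k)
    (hdeg : ∀ v : Fin n, (G.map (·.count v)).sum ≤ d)
    (hloops : Multiset.card (G.filter isLoopE) = l)
    (hsimple : ∀ e ∈ G, isLoopE e → isSimpleLoopE e) :
    k ^ 2 * l * (Multiset.card G - l - 2 * k ^ 2 * d ^ 2) ^ 2 ≤ #(fwdSwitchSet n k l G) := by
  set t := Multiset.card G - l - 2 * k ^ 2 * d ^ 2
  let D := (G.toFinset.filter isLoopE).sigma fun f => (farProperEdges G f).sigma fun e1 =>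
    ((farProperEdges G f).filter (e1 ∩ · = 0)).sigma fun e2 => e1.toFinset ×ˢ e2.toFinset
  have hsq : 2 * k ^ 2 * d ^ 2 = (k * d) * (k * d) + (k * d) * (k * d) := by ring
  have hkd := Nat.le_mul_self (k * d)
  have hproper : ∀ f, ∀ e ∈ farProperEdges G f, e ∈ G ∧ #e.toFinset = k := by
    intro f e he
    obtain ⟨heG, he, -⟩ := mem_filter.mp he
    rw [Multiset.mem_toFinset] at heG
    exact ⟨heG, hedge e heG ▸ Multiset.toFinset_card_of_nodup (not_isLoopE_iff_nodup.mp he)⟩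
  have hD : l * (t * (t * (k * k))) ≤ #D := by
    refine mul_le_card_sigma (card_toFinset_filter_of_nodup hG isLoopE ▸ hloops.ge) fun f hf => ?_
    have hfar := card_sub_sub_le_card_farProperEdges hG hdeg hedge
      (hedge f (Multiset.mem_toFinset.mp (mem_filter.mp hf).1))
    refine mul_le_card_sigma (by omega) fun e1 he1 => mul_le_card_sigma ?_ fun e2 he2 => ?_
    · have hdisj := card_sub_le_card_filter_inter_eq_zero hdeg (s := farProperEdges G f)
        (filter_subset _ _) e1
      rw [hedge e1 (hproper f e1 he1).1] at hdisj
      omega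
    · rw [card_product, (hproper f e1 he1).2, (hproper f e2 (mem_filter.mp he2).1).2]
  let forget : (Multiset (Fin n) × Multiset (Fin n) × Multiset (Fin n)) × (Fin n × Fin n × Fin n) →
      Σ _ : Multiset (Fin n), Σ _ : Multiset (Fin n), Σ _ : Multiset (Fin n), Fin n × Fin n :=
    fun x => ⟨x.1.1, x.1.2.1, x.1.2.2, x.2.2⟩
  have hsurj : Set.SurjOn forget (fwdSwitchSet n k l G) D := by
    rintro ⟨f, e1, e2, ys, zs⟩ hx
    simp only [D, farProperEdges, mem_coe, mem_sigma, mem_filter, mem_product,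
      Multiset.mem_toFinset] at hx
    obtain ⟨⟨hfG, hfL⟩, ⟨he1G, he1, hfar1⟩, ⟨⟨he2G, he2, hfar2⟩, h12⟩, hys, hzs⟩ := hx
    obtain ⟨v, hv⟩ := (hsimple f hfG hfL).exists_count_eq_two
    exact ⟨((f, e1, e2), (v, ys, zs)), mem_fwdSwitchSet.mpr ⟨⟨hfG, he1G, he2G⟩,
      fwdOk_of_farFrom hk hG hedge hloops hsimple hfG (hsimple f hfG hfL) hv he1G he2G he1 he2
        hfar1 hfar2 h12 hys hzs⟩, rfl⟩
  calc k ^ 2 * l * t ^ 2 = l * (t * (t * (k * k))) := by ring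
    _ ≤ #D := hD
    _ ≤ #(fwdSwitchSet n k l G) := card_le_card_of_surjOn _ hsurj

end Bounds

theorem stmt11_general (n d k m l : ℕ) (hk : 3 ≤ k) (hm : n * d = k * m)
    (G : Multiset (Multiset (Fin n)))
    (hGcard : Multiset.card G = m)
    (hedge : ∀ e ∈ G, Multiset.card e = k)
    (hdeg : ∀ v : Fin n, (G.map (fun e => e.count v)).sum ≤ d)
    (hnomult : ∀ e ∈ G, G.count e = 1)
    (hloops : Multiset.card (G.filter isLoopE) = l)
    (hsimple : ∀ e ∈ G, isLoopE e → isSimpleLoopE e) :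
    (fwdSwitchSet n k l G).card ≤ l * k ^ 2 * m ^ 2 ∧
    l * k ^ 2 * m ^ 2 = n ^ 2 * d ^ 2 * l ∧
    k ^ 2 * l * (m - l - 2 * k ^ 2 * d ^ 2) ^ 2 ≤ (fwdSwitchSet n k l G).card := by
  have hG : G.Nodup := Multiset.nodup_iff_count_eq_one.mpr hnomult
  subst hGcard hloops
  refine ⟨card_fwdSwitchSet_le hedge, ?_, le_card_fwdSwitchSet hk hG hedge hdeg rfl hsimple⟩
  rw [← Nat.mul_pow, hm]
  ring

/-- Bounds on the number of forward switchings: if the `k`-multigraph `G` has `m = nd/k`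
edges, maximum degree at most `d`, no multiple edges, and exactly `l ≥ 1` loops, all of
them simple, then the number of forward switchings applicable to `G` is at most
`l·k²·m² = n²d²·l` and at least `k²·l·(m - l - 2k²d²)²`. -/
theorem stmt11 (n d k m l : ℕ) (hk : 3 ≤ k) (hl : 1 ≤ l) (hm : n * d = k * m)
    (G : Multiset (Multiset (Fin n)))
    (hGcard : Multiset.card G = m)
    (hedge : ∀ e ∈ G, Multiset.card e = k)
    (hdeg : ∀ v : Fin n, (G.map (fun e => e.count v)).sum ≤ d)
    (hnomult : ∀ e ∈ G, G.count e = 1)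
    (hloops : Multiset.card (G.filter isLoopE) = l)
    (hsimple : ∀ e ∈ G, isLoopE e → isSimpleLoopE e) :
    (fwdSwitchSet n k l G).card ≤ l * k ^ 2 * m ^ 2 ∧
    l * k ^ 2 * m ^ 2 = n ^ 2 * d ^ 2 * l ∧
    k ^ 2 * l * (m - l - 2 * k ^ 2 * d ^ 2) ^ 2 ≤ (fwdSwitchSet n k l G).card :=
  stmt11_general n d k m l hk hm G hGcard hedge hdeg hnomult hloops hsimple
end

section
/- Let z be a permutation representing a k-multigraph with m = nd/k edges, every vertex of degree exactly d, at most L loops, and no multiple edges. Then the number of backward switchings applicable to z is at most B = binom(k,2)·n·(d)_2·m = ((k-1)/2)·n^2 d^2 (d-1), and at least B - binom(k,2)·(2kLdm + Ln(d)_2 + 2k^2 n d^4). -/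
/-- The multigraph obtained from `G` by a backward switching: the edges `e1', e2'`
(containing `v`) and `e3'` are replaced by the loop `f = e3' ∪ {v,v} - {y⋆,z⋆}` and the
edges `e1 = e1' ∪ {y⋆} - {v}`, `e2 = e2' ∪ {z⋆} - {v}`. -/
def bwdResult {n : ℕ} (G : Multiset (Multiset (Fin n))) (e1' e2' e3' : Multiset (Fin n))
    (v ys zs : Fin n) : Multiset (Multiset (Fin n)) :=
  (v ::ₘ v ::ₘ (e3'.erase ys).erase zs) ::ₘ (ys ::ₘ e1'.erase v) ::ₘ (zs ::ₘ e2'.erase v) ::ₘ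
    (((G.erase e1').erase e2').erase e3')

/-- A valid backward switching choice on `G`: a vertex `v`, distinct edges `e1' ≠ e2'`
both containing `v`, a further edge `e3'`, and distinct vertices `y⋆ ≠ z⋆` of `e3'`,
such that the resulting multigraph has no multiple edges and exactly one more loop. -/
def bwdOk (n : ℕ) (G : Multiset (Multiset (Fin n))) (e1' e2' e3' : Multiset (Fin n))
    (v ys zs : Fin n) : Prop :=
  e1' ≠ e2' ∧ v ∈ e1' ∧ v ∈ e2' ∧ ys ∈ e3' ∧ zs ∈ e3' ∧ ys ≠ zs ∧
  (∀ e ∈ bwdResult G e1' e2' e3' v ys zs, (bwdResult G e1' e2' e3' v ys zs).count e = 1) ∧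
  Multiset.card ((bwdResult G e1' e2' e3' v ys zs).filter isLoopE)
    = Multiset.card (G.filter isLoopE) + 1

instance (n : ℕ) (G : Multiset (Multiset (Fin n))) (e1' e2' e3' : Multiset (Fin n))
    (v ys zs : Fin n) : Decidable (bwdOk n G e1' e2' e3' v ys zs) := by
  unfold bwdOk; infer_instance

/-- The set of all backward switching choices `(v, e1', e2', e3', y⋆, z⋆)` applicable to
`G`; here the pair of edges `(e1', e2')` and the pair of vertices `(y⋆, z⋆)` are both
ordered, so each backward switching (which uses an *unordered* vertex pair `{y⋆, z⋆}`)
is counted exactly twice. -/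
def bwdSwitchSet (n : ℕ) (G : Multiset (Multiset (Fin n))) :
    Finset ((Multiset (Fin n) × Multiset (Fin n) × Multiset (Fin n)) ×
      (Fin n × Fin n × Fin n)) :=
  ((G.toFinset ×ˢ G.toFinset ×ˢ G.toFinset) ×ˢ
      (Finset.univ : Finset (Fin n × Fin n × Fin n))).filter
    (fun t => bwdOk n G t.1.1 t.1.2.1 t.1.2.2 t.2.1 t.2.2.1 t.2.2.2)

open Finset

lemma Multiset.filter_erase_of_not {α : Type*} [DecidableEq α] {p : α → Prop} [DecidablePred p]
    {a : α} (s : Multiset α) (ha : ¬ p a) : (s.erase a).filter p = s.filter p := by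
  by_cases h : a ∈ s
  · conv_rhs => rw [← Multiset.cons_erase h]
    rw [Multiset.filter_cons_of_neg _ ha]
  · rw [Multiset.erase_of_notMem h]

lemma Multiset.exists_mem_erase_of_two_le_card {α : Type*} [DecidableEq α] {s : Multiset α}
    {a : α} (ha : a ∈ s) (hs : 2 ≤ Multiset.card s) : ∃ b, b ∈ s.erase a := by
  rw [← Multiset.card_pos_iff_exists_mem, Multiset.card_erase_of_mem ha, Nat.pred_eq_sub_one]
  omega

lemma Finset.card_offDiag_eq_descFactorial {α : Type*} (s : Finset α) :
    #s.offDiag = (#s).descFactorial 2 := by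
  rw [offDiag_card]
  simp [Nat.descFactorial, Nat.mul_sub, mul_comm]

lemma Nat.descFactorial_two_add_le (r t : ℕ) :
    (r + t).descFactorial 2 ≤ r.descFactorial 2 + 2 * (r + t) * t := by
  simp only [Nat.descFactorial, Nat.sub_zero, Nat.mul_one]
  rcases r with _ | r <;> rcases t with _ | t <;> simp <;> nlinarith

namespace BackwardSwitching

variable {n : ℕ}

lemma not_isLoopE_iff_nodup {e : Multiset (Fin n)} : ¬ isLoopE e ↔ e.Nodup := by
  simp only [isLoopE, Multiset.nodup_iff_count_le_one, not_exists, not_le]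
  exact forall_congr' fun _ => Nat.lt_succ_iff

lemma isLoopE_cons_cons (v : Fin n) (e : Multiset (Fin n)) : isLoopE (v ::ₘ v ::ₘ e) :=
  ⟨v, by simp⟩

lemma nodup_cons_erase {e : Multiset (Fin n)} {v y : Fin n} (he : e.Nodup) (hy : y ∉ e) :
    (y ::ₘ e.erase v).Nodup :=
  Multiset.nodup_cons.2 ⟨fun h => hy (Multiset.mem_of_mem_erase h), he.erase v⟩

section Result

variable {G : Multiset (Multiset (Fin n))} {e₁ e₂ e₃ : Multiset (Fin n)} {v y z : Fin n}

lemma bwdResult_nodup (hG : G.Nodup) (he₁ : e₁.Nodup) (he₂ : e₂.Nodup) (hy₁ : y ∉ e₁)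
    (hy₂ : y ∉ e₂) (hz₂ : z ∉ e₂) (hyz : y ≠ z)
    (hf : v ::ₘ v ::ₘ (e₃.erase y).erase z ∉ G) (ha₁ : y ::ₘ e₁.erase v ∉ G)
    (ha₂ : z ::ₘ e₂.erase v ∉ G) :
    (bwdResult G e₁ e₂ e₃ v y z).Nodup := by
  have hle : ((G.erase e₁).erase e₂).erase e₃ ≤ G :=
    ((Multiset.erase_le _ _).trans (Multiset.erase_le _ _)).trans (Multiset.erase_le _ _)
  have hloop := isLoopE_cons_cons v ((e₃.erase y).erase z)
  have hnd₁ : (y ::ₘ e₁.erase v).Nodup := nodup_cons_erase he₁ hy₁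
  have hnd₂ : (z ::ₘ e₂.erase v).Nodup := nodup_cons_erase he₂ hz₂
  have h₁₂ : y ::ₘ e₁.erase v ≠ z ::ₘ e₂.erase v := fun h => by
    have hy := Multiset.mem_cons_self y (e₁.erase v)
    rw [h, Multiset.mem_cons] at hy
    exact hy.elim hyz fun hy => hy₂ (Multiset.mem_of_mem_erase hy)
  simp only [bwdResult, Multiset.nodup_cons, Multiset.mem_cons, not_or]
  exact ⟨⟨fun h => not_isLoopE_iff_nodup.2 hnd₁ (h ▸ hloop),
      fun h => not_isLoopE_iff_nodup.2 hnd₂ (h ▸ hloop), fun h => hf (Multiset.mem_of_le hle h)⟩,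
    ⟨h₁₂, fun h => ha₁ (Multiset.mem_of_le hle h)⟩, fun h => ha₂ (Multiset.mem_of_le hle h),
    Multiset.nodup_of_le hle hG⟩

lemma filter_isLoopE_bwdResult (he₁ : e₁.Nodup) (he₂ : e₂.Nodup) (he₃ : e₃.Nodup)
    (hy₁ : y ∉ e₁) (hz₂ : z ∉ e₂) :
    (bwdResult G e₁ e₂ e₃ v y z).filter isLoopE
      = (v ::ₘ v ::ₘ (e₃.erase y).erase z) ::ₘ G.filter isLoopE := by
  have hl : ∀ {e : Multiset (Fin n)}, e.Nodup → ¬ isLoopE e := not_isLoopE_iff_nodup.2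
  rw [bwdResult, Multiset.filter_cons_of_pos _ (isLoopE_cons_cons _ _),
    Multiset.filter_cons_of_neg _ (hl (nodup_cons_erase he₁ hy₁)),
    Multiset.filter_cons_of_neg _ (hl (nodup_cons_erase he₂ hz₂)),
    Multiset.filter_erase_of_not _ (hl he₃), Multiset.filter_erase_of_not _ (hl he₂),
    Multiset.filter_erase_of_not _ (hl he₁)]

theorem bwdOk_of_fresh (hG : G.Nodup) (h₁₂ : e₁ ≠ e₂) (hv₁ : v ∈ e₁) (hv₂ : v ∈ e₂)
    (hy : y ∈ e₃) (hz : z ∈ e₃) (hyz : y ≠ z) (he₁ : e₁.Nodup) (he₂ : e₂.Nodup)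
    (he₃ : e₃.Nodup) (hy₁ : y ∉ e₁) (hy₂ : y ∉ e₂) (hz₂ : z ∉ e₂)
    (hf : v ::ₘ v ::ₘ (e₃.erase y).erase z ∉ G) (ha₁ : y ::ₘ e₁.erase v ∉ G)
    (ha₂ : z ::ₘ e₂.erase v ∉ G) :
    bwdOk n G e₁ e₂ e₃ v y z :=
  ⟨h₁₂, hv₁, hv₂, hy, hz, hyz, fun _ he => Multiset.count_eq_one_of_mem
      (bwdResult_nodup hG he₁ he₂ hy₁ hy₂ hz₂ hyz hf ha₁ ha₂) he,
    by rw [filter_isLoopE_bwdResult he₁ he₂ he₃ hy₁ hz₂, Multiset.card_cons]⟩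

end Result

abbrev Wedge (n : ℕ) := Σ _ : Fin n, Multiset (Fin n) × Multiset (Fin n)

abbrev MarkedEdge (n : ℕ) := Σ _ : Multiset (Fin n), Fin n × Fin n

abbrev SwitchData (n : ℕ) :=
  (Multiset (Fin n) × Multiset (Fin n) × Multiset (Fin n)) × (Fin n × Fin n × Fin n)

/-- The choices `(v, e₁', e₂')` of a backward switching. -/
def wedges (F : Finset (Multiset (Fin n))) : Finset (Wedge n) :=
  univ.sigma fun v => (F.filter (v ∈ ·)).offDiag

/-- The choices `(e₃', y⋆, z⋆)` of a backward switching. -/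
def markedEdges (F : Finset (Multiset (Fin n))) : Finset (MarkedEdge n) :=
  F.sigma fun e => e.toFinset.offDiag

def switchEquiv : (Σ _ : Wedge n, MarkedEdge n) ≃ SwitchData n where
  toFun x := ((x.1.2.1, x.1.2.2, x.2.1), (x.1.1, x.2.2.1, x.2.2.2))
  invFun a := ⟨⟨a.2.1, a.1.1, a.1.2.1⟩, ⟨a.1.2.2, a.2.2.1, a.2.2.2⟩⟩
  left_inv _ := rfl
  right_inv _ := rfl

def switchCandidates (W : Finset (Wedge n)) (M : Wedge n → Finset (MarkedEdge n)) :
    Finset (SwitchData n) :=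
  (W.sigma M).map switchEquiv.toEmbedding

section Candidates

variable {F : Finset (Multiset (Fin n))} {e e₁ e₂ e₃ : Multiset (Fin n)} {v y z : Fin n}

@[simp]
lemma mk_mem_wedges : (⟨v, e₁, e₂⟩ : Wedge n) ∈ wedges F ↔
    (e₁ ∈ F ∧ v ∈ e₁) ∧ (e₂ ∈ F ∧ v ∈ e₂) ∧ e₁ ≠ e₂ := by
  simp [wedges]

@[simp]
lemma mk_mem_markedEdges : (⟨e, y, z⟩ : MarkedEdge n) ∈ markedEdges F ↔
    e ∈ F ∧ y ∈ e ∧ z ∈ e ∧ y ≠ z := by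
  simp [markedEdges]

@[simp]
lemma mk_mem_switchCandidates {W : Finset (Wedge n)} {M : Wedge n → Finset (MarkedEdge n)} :
    ((e₁, e₂, e₃), (v, y, z)) ∈ switchCandidates W M ↔
      ⟨v, e₁, e₂⟩ ∈ W ∧ ⟨e₃, y, z⟩ ∈ M ⟨v, e₁, e₂⟩ := by
  simp only [switchCandidates, mem_map_equiv, mem_sigma]
  rfl

lemma card_switchCandidates (W : Finset (Wedge n)) (M : Wedge n → Finset (MarkedEdge n)) :
    #(switchCandidates W M) = ∑ p ∈ W, #(M p) := by
  rw [switchCandidates, card_map, card_sigma]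

lemma card_wedges (F : Finset (Multiset (Fin n))) :
    #(wedges F) = ∑ v, (#(F.filter (v ∈ ·))).descFactorial 2 := by
  simp only [wedges, card_sigma, card_offDiag_eq_descFactorial]

lemma card_wedges_le {d : ℕ} (hdeg : ∀ v, #(F.filter (v ∈ ·)) ≤ d) :
    #(wedges F) ≤ n * d.descFactorial 2 := by
  rw [card_wedges]
  calc ∑ v, (#(F.filter (v ∈ ·))).descFactorial 2 ≤ ∑ _v : Fin n, d.descFactorial 2 :=
        sum_le_sum fun v _ => Nat.descFactorial_le 2 (hdeg v)
    _ = n * d.descFactorial 2 := by simp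

lemma card_markedEdges_le {k : ℕ} (hk : ∀ e ∈ F, #e.toFinset ≤ k) :
    #(markedEdges F) ≤ #F * k.descFactorial 2 := by
  rw [markedEdges, card_sigma, ← smul_eq_mul, ← sum_const]
  exact sum_le_sum fun e he => card_offDiag_eq_descFactorial _ ▸ Nat.descFactorial_le 2 (hk e he)

lemma card_markedEdges_of_nodup {k : ℕ} (hnd : ∀ e ∈ F, e.Nodup)
    (hk : ∀ e ∈ F, Multiset.card e = k) :
    #(markedEdges F) = #F * k.descFactorial 2 := by
  rw [markedEdges, card_sigma, ← smul_eq_mul, ← sum_const]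
  refine sum_congr rfl fun e he => ?_
  rw [card_offDiag_eq_descFactorial, Multiset.toFinset_card_of_nodup (hnd e he), hk e he]

end Candidates

/-- The edges of `F` at distance at most two from `e` in the intersection graph. -/
def nearEdges (F : Finset (Multiset (Fin n))) (e : Multiset (Fin n)) :
    Finset (Multiset (Fin n)) :=
  F.filter fun e' => ∃ w ∈ e, ∃ g ∈ F, w ∈ g ∧ ∃ w' ∈ g, w' ∈ e'

section Degrees

variable {F : Finset (Multiset (Fin n))} {d k : ℕ}

lemma card_nearEdges_le (hdeg : ∀ v, #(F.filter (v ∈ ·)) ≤ d)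
    (hk : ∀ e ∈ F, #e.toFinset ≤ k) {e : Multiset (Fin n)} (he : e ∈ F) :
    #(nearEdges F e) ≤ k * (d * (k * d)) := by
  have hsub : nearEdges F e ⊆ e.toFinset.biUnion fun w => (F.filter (w ∈ ·)).biUnion
      fun g => g.toFinset.biUnion fun w' => F.filter (w' ∈ ·) := by
    intro e' he'
    obtain ⟨he'F, w, hw, g, hg, hwg, w', hw'g, hw'⟩ := mem_filter.1 he'
    simp only [mem_biUnion, mem_filter, Multiset.mem_toFinset]
    exact ⟨w, hw, g, ⟨hg, hwg⟩, w', hw'g, he'F, hw'⟩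
  have hlast : ∀ g ∈ F, #(g.toFinset.biUnion fun w' => F.filter (w' ∈ ·)) ≤ k * d :=
    fun g hg => (card_biUnion_le_card_mul _ _ d fun w' _ => hdeg w').trans
      (Nat.mul_le_mul_right d (hk g hg))
  have hmid : ∀ w, #((F.filter (w ∈ ·)).biUnion
      fun g => g.toFinset.biUnion fun w' => F.filter (w' ∈ ·)) ≤ d * (k * d) :=
    fun w => (card_biUnion_le_card_mul _ _ _ fun g hg => hlast g (mem_filter.1 hg).1).trans
      (Nat.mul_le_mul_right _ (hdeg w))
  exact (card_le_card hsub).trans ((card_biUnion_le_card_mul _ _ _ fun w _ => hmid w).trans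
    (Nat.mul_le_mul_right _ (hk e he)))

lemma card_filter_mem_le (hdeg : ∀ v, ∑ e ∈ F, e.count v = d) (v : Fin n) :
    #(F.filter (v ∈ ·)) ≤ d := by
  rw [card_filter, ← hdeg v]
  refine sum_le_sum fun e _ => ?_
  split_ifs with h
  · exact Multiset.one_le_count_iff_mem.2 h
  · exact Nat.zero_le _

lemma card_filter_nonloop_add_sum_loop (hdeg : ∀ v, ∑ e ∈ F, e.count v = d) (v : Fin n) :
    #((F.filter (¬ isLoopE ·)).filter (v ∈ ·)) + ∑ e ∈ F.filter isLoopE, e.count v = d := by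
  rw [← hdeg v, ← sum_filter_add_sum_filter_not F isLoopE, add_comm, card_filter]
  congr 1
  refine sum_congr rfl fun e he => ?_
  rw [Multiset.count_eq_of_nodup (not_isLoopE_iff_nodup.1 (mem_filter.1 he).2)]

lemma sum_count_loops (hedge : ∀ e ∈ F, Multiset.card e = k) :
    ∑ v, ∑ e ∈ F.filter isLoopE, e.count v = k * #(F.filter isLoopE) := by
  rw [sum_comm, mul_comm, ← smul_eq_mul, ← sum_const]
  refine sum_congr rfl fun e he => ?_
  rw [Multiset.sum_count_eq_card fun _ _ => mem_univ _, hedge e (mem_filter.1 he).1]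

/-- Every loop through `v` costs at most `2d` wedges at `v`. -/
lemma le_card_wedges_nonloop (hdeg : ∀ v, ∑ e ∈ F, e.count v = d)
    (hedge : ∀ e ∈ F, Multiset.card e = k) :
    n * d.descFactorial 2
      ≤ #(wedges (F.filter (¬ isLoopE ·))) + 2 * d * (k * #(F.filter isLoopE)) := by
  rw [card_wedges, ← sum_count_loops hedge, mul_sum, ← sum_add_distrib]
  calc n * d.descFactorial 2 = ∑ _v : Fin n, d.descFactorial 2 := by simp
    _ ≤ _ := sum_le_sum fun v _ => by
      have h := Nat.descFactorial_two_add_le (#((F.filter (¬ isLoopE ·)).filter (v ∈ ·)))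
        (∑ e ∈ F.filter isLoopE, e.count v)
      rwa [card_filter_nonloop_add_sum_loop hdeg v] at h

end Degrees

section Switchings

variable {F : Finset (Multiset (Fin n))} {d k : ℕ}

lemma mem_bwdSwitchSet {a : SwitchData n} :
    a ∈ bwdSwitchSet n F.val ↔ (a.1.1 ∈ F ∧ a.1.2.1 ∈ F ∧ a.1.2.2 ∈ F) ∧
      bwdOk n F.val a.1.1 a.1.2.1 a.1.2.2 a.2.1 a.2.2.1 a.2.2.2 := by
  simp only [bwdSwitchSet, mem_filter, mem_product, val_toFinset, mem_univ, and_true]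

lemma bwdSwitchSet_subset_switchCandidates :
    bwdSwitchSet n F.val ⊆ switchCandidates (wedges F) fun _ => markedEdges F := by
  rintro ⟨⟨e₁, e₂, e₃⟩, v, y, z⟩ ha
  obtain ⟨⟨h₁, h₂, h₃⟩, h₁₂, hv₁, hv₂, hy, hz, hyz, -⟩ := mem_bwdSwitchSet.1 ha
  exact mk_mem_switchCandidates.2
    ⟨mk_mem_wedges.2 ⟨⟨h₁, hv₁⟩, ⟨h₂, hv₂⟩, h₁₂⟩, mk_mem_markedEdges.2 ⟨h₃, hy, hz, hyz⟩⟩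

theorem mem_bwdSwitchSet_of_not_mem_nearEdges (hk : 3 ≤ k)
    (hedge : ∀ e ∈ F, Multiset.card e = k) {a : SwitchData n}
    (ha : a ∈ switchCandidates (wedges (F.filter (¬ isLoopE ·)))
      fun _ => markedEdges (F.filter (¬ isLoopE ·)))
    (hfar : a.1.2.2 ∉ nearEdges F a.1.1 ∪ nearEdges F a.1.2.1) :
    a ∈ bwdSwitchSet n F.val := by
  obtain ⟨⟨e₁, e₂, e₃⟩, v, y, z⟩ := a
  simp only [mk_mem_switchCandidates, mk_mem_wedges, mk_mem_markedEdges, mem_filter,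
    not_isLoopE_iff_nodup] at ha
  obtain ⟨⟨⟨⟨h₁, hl₁⟩, hv₁⟩, ⟨⟨h₂, hl₂⟩, hv₂⟩, h₁₂⟩, ⟨h₃, hl₃⟩, hy, hz, hyz⟩ := ha
  simp only [mem_union, not_or] at hfar
  have near : ∀ {e}, e₃ ∉ nearEdges F e → ∀ w ∈ e, ∀ g ∈ F, w ∈ g → ∀ w' ∈ g, w' ∉ e₃ :=
    fun hfar w hw g hg hwg w' hw'g hw' => hfar (mem_filter.2 ⟨h₃, w, hw, g, hg, hwg, w', hw'g, hw'⟩)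
  have disjoint : ∀ {e}, e ∈ F → e₃ ∉ nearEdges F e → ∀ w ∈ e, w ∉ e₃ :=
    fun he hfar w hw => near hfar w hw _ he hw w hw
  have fresh : ∀ {e}, e ∈ F → e₃ ∉ nearEdges F e → v ∈ e → ∀ x ∈ e₃, x ::ₘ e.erase v ∉ F.val :=
    fun {e} he hfar hv x hx hxF => by
      obtain ⟨w, hw⟩ := Multiset.exists_mem_erase_of_two_le_card hv (by rw [hedge e he]; omega)
      exact near hfar w (Multiset.mem_of_mem_erase hw) _ hxF
        (Multiset.mem_cons_of_mem hw) x (Multiset.mem_cons_self _ _) hx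
  have hf : v ::ₘ v ::ₘ (e₃.erase y).erase z ∉ F.val := fun hfF => by
    have hz' : z ∈ e₃.erase y := (Multiset.mem_erase_of_ne hyz.symm).2 hz
    obtain ⟨w, hw⟩ := Multiset.exists_mem_erase_of_two_le_card hz'
      (by rw [Multiset.card_erase_of_mem hy, hedge e₃ h₃, Nat.pred_eq_sub_one]; omega)
    exact near hfar.1 v hv₁ _ hfF (Multiset.mem_cons_self _ _) w
      (Multiset.mem_cons_of_mem (Multiset.mem_cons_of_mem hw))
      (Multiset.mem_of_mem_erase (Multiset.mem_of_mem_erase hw))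
  refine mem_bwdSwitchSet.2 ⟨⟨h₁, h₂, h₃⟩, bwdOk_of_fresh F.nodup h₁₂ hv₁ hv₂ hy hz hyz
    hl₁ hl₂ hl₃ (fun h => disjoint h₁ hfar.1 y h hy) (fun h => disjoint h₂ hfar.2 y h hy)
    (fun h => disjoint h₂ hfar.2 z h hz) hf (fresh h₁ hfar.1 hv₁ y hy)
    (fresh h₂ hfar.2 hv₂ z hz)⟩

lemma card_filter_nearEdges_le {F₀ : Finset (Multiset (Fin n))} (hF₀ : F₀ ⊆ F)
    (hdeg : ∀ v, #(F.filter (v ∈ ·)) ≤ d) (hk : ∀ e ∈ F, #e.toFinset ≤ k) :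
    #((switchCandidates (wedges F₀) fun _ => markedEdges F₀).filter
        fun a => a.1.2.2 ∈ nearEdges F a.1.1 ∪ nearEdges F a.1.2.1)
      ≤ #(wedges F₀) * (2 * (k * (d * (k * d))) * k.descFactorial 2) := by
  have hsub : (switchCandidates (wedges F₀) fun _ => markedEdges F₀).filter
        (fun a => a.1.2.2 ∈ nearEdges F a.1.1 ∪ nearEdges F a.1.2.1)
      ⊆ switchCandidates (wedges F₀)
        fun p => markedEdges (nearEdges F p.2.1 ∪ nearEdges F p.2.2) := by
    rintro ⟨⟨e₁, e₂, e₃⟩, v, y, z⟩ ha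
    simp only [mem_filter, mk_mem_switchCandidates, mk_mem_markedEdges] at ha ⊢
    exact ⟨ha.1.1, ha.2, ha.1.2.2⟩
  refine (card_le_card hsub).trans ?_
  rw [card_switchCandidates, ← smul_eq_mul, ← sum_const]
  refine sum_le_sum fun p hp => ?_
  obtain ⟨v, e₁, e₂⟩ := p
  obtain ⟨⟨h₁, -⟩, ⟨h₂, -⟩, -⟩ := mk_mem_wedges.1 hp
  have hnear : ∀ e ∈ nearEdges F e₁ ∪ nearEdges F e₂, #e.toFinset ≤ k := fun e he =>
    hk e (by rcases mem_union.1 he with he | he <;> exact (mem_filter.1 he).1)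
  refine (card_markedEdges_le hnear).trans (Nat.mul_le_mul_right _ ?_)
  refine (card_union_le _ _).trans ?_
  have := card_nearEdges_le hdeg hk (hF₀ h₁)
  have := card_nearEdges_le hdeg hk (hF₀ h₂)
  omega

theorem card_bwdSwitchSet_le (hdeg : ∀ v, ∑ e ∈ F, e.count v = d)
    (hedge : ∀ e ∈ F, Multiset.card e = k) :
    #(bwdSwitchSet n F.val) ≤ n * d.descFactorial 2 * (#F * k.descFactorial 2) :=
  calc #(bwdSwitchSet n F.val)
      ≤ #(switchCandidates (wedges F) fun _ => markedEdges F) :=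
        card_le_card bwdSwitchSet_subset_switchCandidates
    _ = #(wedges F) * #(markedEdges F) := by rw [card_switchCandidates, sum_const, smul_eq_mul]
    _ ≤ _ := Nat.mul_le_mul (card_wedges_le (card_filter_mem_le hdeg))
        (card_markedEdges_le fun e he => (Multiset.toFinset_card_le e).trans (hedge e he).le)

theorem card_bwdSwitchSet_ge {L : ℕ} (hk : 3 ≤ k) (hdeg : ∀ v, ∑ e ∈ F, e.count v = d)
    (hedge : ∀ e ∈ F, Multiset.card e = k) (hL : #(F.filter isLoopE) ≤ L) :
    n * d.descFactorial 2 * (#F * k.descFactorial 2)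
      ≤ #(bwdSwitchSet n F.val) + k.descFactorial 2 *
          (2 * k * L * d * #F + L * n * d.descFactorial 2 + 2 * k ^ 2 * n * d ^ 4) := by
  set Fnl := F.filter (¬ isLoopE ·)
  set C := switchCandidates (wedges Fnl) fun _ => markedEdges Fnl
  have hsize : ∀ e ∈ F, #e.toFinset ≤ k :=
    fun e he => (Multiset.toFinset_card_le e).trans (hedge e he).le
  have hcover : #(wedges Fnl) * #(markedEdges Fnl) ≤ #(bwdSwitchSet n F.val) +
      #(C.filter fun a => a.1.2.2 ∈ nearEdges F a.1.1 ∪ nearEdges F a.1.2.1) := by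
    rw [← sum_const_nat fun _ _ => rfl, ← card_switchCandidates,
      ← card_filter_add_card_filter_not
        fun a => a.1.2.2 ∈ nearEdges F a.1.1 ∪ nearEdges F a.1.2.1, add_comm]
    refine Nat.add_le_add_right (card_le_card fun a ha => ?_) _
    exact mem_bwdSwitchSet_of_not_mem_nearEdges hk hedge (mem_filter.1 ha).1 (mem_filter.1 ha).2
  have hnear :=
    card_filter_nearEdges_le (F₀ := Fnl) (filter_subset _ F) (card_filter_mem_le hdeg) hsize
  have hW := le_card_wedges_nonloop hdeg hedge
  have hWle : #(wedges Fnl) ≤ n * d.descFactorial 2 := card_wedges_le fun v =>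
    (card_le_card (filter_subset_filter _ (filter_subset _ _))).trans (card_filter_mem_le hdeg v)
  have hM : #(markedEdges Fnl) = #Fnl * k.descFactorial 2 := card_markedEdges_of_nodup
    (fun e he => not_isLoopE_iff_nodup.1 (mem_filter.1 he).2)
    fun e he => hedge e (mem_filter.1 he).1
  have hsplit : #(F.filter isLoopE) + #Fnl = #F := card_filter_add_card_filter_not _
  have hD : d.descFactorial 2 ≤ d ^ 2 := Nat.descFactorial_le_pow d 2
  set X := n * d.descFactorial 2
  set K := k.descFactorial 2
  set W := #(wedges Fnl)
  set l := #(F.filter isLoopE)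
  have hFnl : #Fnl ≤ #F := by omega
  calc X * (#F * K) = X * (#Fnl * K) + X * (l * K) := by rw [← hsplit]; ring
    _ ≤ (W + 2 * d * (k * l)) * #(markedEdges Fnl) + X * (L * K) := by rw [hM]; gcongr
    _ ≤ W * #(markedEdges Fnl) + 2 * d * (k * L) * (#F * K) + X * (L * K) := by
        rw [add_mul, hM]; gcongr
    _ ≤ #(bwdSwitchSet n F.val) + X * (2 * (k * (d * (k * d))) * K)
          + 2 * d * (k * L) * (#F * K) + X * (L * K) := by
        gcongr
        exact hcover.trans (Nat.add_le_add_left (hnear.trans (Nat.mul_le_mul_right _ hWle)) _)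
    _ ≤ #(bwdSwitchSet n F.val) + n * d ^ 2 * (2 * (k * (d * (k * d))) * K)
          + 2 * d * (k * L) * (#F * K) + X * (L * K) := by gcongr; exact Nat.mul_le_mul_left n hD
    _ = _ := by ring

end Switchings

end BackwardSwitching

/-- Bounds on the number of backward switchings: if `G` is a `d`-regular `k`-multigraph
with `m = nd/k` edges, at most `L` loops, and no multiple edges, then the number of
backward switchings applicable to `G` (counted here with ordered vertex pairs, hence
twice each) is at most `2B` where `B = C(k,2)·n·(d)_2·m = ((k-1)/2)·n²d²(d-1)`, and at
least `2(B - C(k,2)(2kLdm + Ln(d)_2 + 2k²nd⁴))`. -/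
theorem stmt12 (n d k m L : ℕ) (hk : 3 ≤ k) (hm : n * d = k * m)
    (G : Multiset (Multiset (Fin n)))
    (hGcard : Multiset.card G = m)
    (hedge : ∀ e ∈ G, Multiset.card e = k)
    (hdeg : ∀ v : Fin n, (G.map (fun e => e.count v)).sum = d)
    (hnomult : ∀ e ∈ G, G.count e = 1)
    (hloops : Multiset.card (G.filter isLoopE) ≤ L) :
    (bwdSwitchSet n G).card ≤ 2 * (k.choose 2 * n * d.descFactorial 2 * m) ∧
    2 * (k.choose 2 * n * d.descFactorial 2 * m)
        - 2 * (k.choose 2 * (2 * k * L * d * m + L * n * d.descFactorial 2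
            + 2 * k ^ 2 * n * d ^ 4))
      ≤ (bwdSwitchSet n G).card ∧
    ((k.choose 2 * n * d.descFactorial 2 * m : ℕ) : ℝ)
      = ((k : ℝ) - 1) / 2 * (n : ℝ) ^ 2 * (d : ℝ) ^ 2 * ((d : ℝ) - 1) := by
  lift G to Finset (Multiset (Fin n)) using Multiset.nodup_iff_count_eq_one.2 hnomult
  have hK : k.descFactorial 2 = 2 * k.choose 2 := Nat.descFactorial_eq_factorial_mul_choose k 2
  have hupper := BackwardSwitching.card_bwdSwitchSet_le hdeg hedge
  have hlower := BackwardSwitching.card_bwdSwitchSet_ge hk hdeg hedge hloops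
  obtain rfl : #G = m := hGcard
  refine ⟨?_, ?_, ?_⟩
  · convert hupper using 1
    rw [hK]; ring
  · rw [tsub_le_iff_right]
    convert hlower using 1 <;> rw [hK] <;> ring
  · have hm' : (n : ℝ) * d = k * #G := by exact_mod_cast hm
    push_cast [Nat.cast_choose_two, Nat.cast_descFactorial_two]
    linear_combination (1 - (k : ℝ)) / 2 * n * d * (d - 1) * hm'
end
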